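/- arXiv:1106.5708 — 8 statements merged into one kernel-verified Lean document; each statement's English description precedes it below -/
import Mathlib

section
/- Fix q ∈ ℂ with q ≠ 0 and integers k ≥ 1, r ≥ 1, and let A = A(ℂP²_θ). Given complex matrices B₁, B₂ ∈ M_{k×k}(ℂ), I ∈ M_{k×r}(ℂ), J ∈ M_{r×k}(ℂ), define the block matrices over A: σ ∈ M_{(2k+r)×k}(A), the vertical stack of the three blocks B₁w₃ + q·w₁·1_k, B₂w₃ + q⁻¹·w₂·1_k, and J·w₃; and τ ∈ M_{k×(2k+r)}(A), the horizontal row of the three blocks −q⁻²B₂w₃ − q⁻¹·w₂·1_k, B₁w₃ + q⁻¹·w₁·1_k, and I·w₃ (where for a complex matrix M and a ∈ A, M·a denotes the matrix over A with entries M_{uv}a). Then τ·σ = (B₁B₂ − q⁻²B₂B₁ + IJ)·w₃² in M_{k×k}(A). In particular, τ·σ = 0 if and only if the braided complex ADHM equation B₁B₂ − q⁻²B₂B₁ + IJ = 0 holds. -/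
/-!
Expand `τσ = τ₁σ₁ + τ₂σ₂ + τ₃σ₃` blockwise. Since `w₃` is central and `w₁w₂ = q²w₂w₁`, each
product is a combination of the ordered monomials `w₃², w₃w₁, w₃w₂, w₂w₁`, and the coefficients
of the last three in `τ₁σ₁` and `τ₂σ₂` cancel, leaving `(B₁B₂ − q⁻²B₂B₁ + IJ)·w₃²`. The character
`w₁, w₂ ↦ 0`, `w₃ ↦ 1` of `A` shows that `M·w₃² = 0` forces `M = 0`.
-/

noncomputable section

open FreeAlgebra

/-- The relations of the homogeneous coordinate algebra `A(ℂP²_θ)`: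
`w₁w₂ = q² w₂w₁`, `w₁w₃ = w₃w₁`, `w₂w₃ = w₃w₂` (generators indexed `0, 1, 2`). -/
inductive P2Rel (q : ℂ) : FreeAlgebra ℂ (Fin 3) → FreeAlgebra ℂ (Fin 3) → Prop
  | r12 : P2Rel q (ι ℂ 0 * ι ℂ 1) (q ^ 2 • (ι ℂ 1 * ι ℂ 0))
  | r13 : P2Rel q (ι ℂ 0 * ι ℂ 2) (ι ℂ 2 * ι ℂ 0)
  | r23 : P2Rel q (ι ℂ 1 * ι ℂ 2) (ι ℂ 2 * ι ℂ 1)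

/-- The homogeneous coordinate algebra `A = A(ℂP²_θ)`. -/
abbrev P2Alg (q : ℂ) := RingQuot (P2Rel q)

/-- The generators `w₁, w₂, w₃` of `A(ℂP²_θ)` (indexed by `0, 1, 2`). -/
def wP2 (q : ℂ) (i : Fin 3) : P2Alg q := RingQuot.mkAlgHom ℂ (P2Rel q) (ι ℂ i)

/-- For a complex matrix `M` and an algebra element `a`, the matrix `M·a` with
entries `M_{uv} a`. -/
def cMat {m n : Type*} {A : Type*} [Semiring A] [Algebra ℂ A]
    (M : Matrix m n ℂ) (a : A) : Matrix m n A :=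
  M.map fun c => algebraMap ℂ A c * a

/-- The monad differential `σ = σ_{(B,I,J)}`, the vertical stack of the blocks
`B₁w₃ + q·w₁·1_k`, `B₂w₃ + q⁻¹·w₂·1_k` and `J·w₃`. -/
def σMat (q : ℂ) (k r : ℕ) (B1 B2 : Matrix (Fin k) (Fin k) ℂ)
    (I : Matrix (Fin k) (Fin r) ℂ) (J : Matrix (Fin r) (Fin k) ℂ) :
    Matrix (Fin k ⊕ (Fin k ⊕ Fin r)) (Fin k) (P2Alg q) :=
  Matrix.fromRows
    (cMat B1 (wP2 q 2) + cMat (q • (1 : Matrix (Fin k) (Fin k) ℂ)) (wP2 q 0))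
    (Matrix.fromRows
      (cMat B2 (wP2 q 2) + cMat (q⁻¹ • (1 : Matrix (Fin k) (Fin k) ℂ)) (wP2 q 1))
      (cMat J (wP2 q 2)))

/-- The monad differential `τ = τ_{(B,I,J)}`, the horizontal row of the blocks
`−q⁻²B₂w₃ − q⁻¹·w₂·1_k`, `B₁w₃ + q⁻¹·w₁·1_k` and `I·w₃`. -/
def τMat (q : ℂ) (k r : ℕ) (B1 B2 : Matrix (Fin k) (Fin k) ℂ)
    (I : Matrix (Fin k) (Fin r) ℂ) (J : Matrix (Fin r) (Fin k) ℂ) :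
    Matrix (Fin k) (Fin k ⊕ (Fin k ⊕ Fin r)) (P2Alg q) :=
  Matrix.fromCols
    (cMat (-(q ^ 2)⁻¹ • B2) (wP2 q 2) + cMat (-q⁻¹ • (1 : Matrix (Fin k) (Fin k) ℂ)) (wP2 q 1))
    (Matrix.fromCols
      (cMat B1 (wP2 q 2) + cMat (q⁻¹ • (1 : Matrix (Fin k) (Fin k) ℂ)) (wP2 q 0))
      (cMat I (wP2 q 2)))

section cMat

variable {m n p : Type*} {A : Type*} [Semiring A] [Algebra ℂ A]

lemma cMat_mul [Fintype n] (M : Matrix m n ℂ) (N : Matrix n p ℂ) (a b : A) :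
    cMat M a * cMat N b = cMat (M * N) (a * b) := by
  ext i j
  simp only [cMat, Matrix.mul_apply, Matrix.map_apply, map_sum, Finset.sum_mul, map_mul]
  refine Finset.sum_congr rfl fun v _ => ?_
  rw [mul_assoc, mul_assoc, ← mul_assoc a, ← Algebra.commutes (N v j) a, mul_assoc]

lemma cMat_add (M N : Matrix m n ℂ) (a : A) : cMat (M + N) a = cMat M a + cMat N a := by
  ext i j
  simp [cMat, add_mul]

lemma cMat_smul_right (c : ℂ) (M : Matrix m n ℂ) (a : A) : cMat M (c • a) = cMat (c • M) a := by
  ext i j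
  simp only [cMat, Matrix.map_apply, Matrix.smul_apply, smul_eq_mul, map_mul, Algebra.smul_def]
  rw [← mul_assoc, Algebra.commutes (M i j)]

@[simp]
lemma zero_cMat (a : A) : cMat (0 : Matrix m n ℂ) a = 0 := by
  ext i j
  simp [cMat]

lemma cMat_eq_zero_iff {M : Matrix m n ℂ} {a : A} (f : A →ₐ[ℂ] ℂ) (ha : f a ≠ 0) :
    cMat M a = 0 ↔ M = 0 := by
  refine ⟨fun h => ?_, fun h => h ▸ zero_cMat a⟩
  ext i j
  have hij := congrArg f (congrFun₂ h i j)
  simpa [cMat, ha] using hij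

end cMat

lemma wP2_zero_mul_wP2_one (q : ℂ) : wP2 q 0 * wP2 q 1 = q ^ 2 • (wP2 q 1 * wP2 q 0) := by
  simpa [wP2] using RingQuot.mkAlgHom_rel ℂ (P2Rel.r12 (q := q))

lemma wP2_zero_mul_wP2_two (q : ℂ) : wP2 q 0 * wP2 q 2 = wP2 q 2 * wP2 q 0 := by
  simpa [wP2] using RingQuot.mkAlgHom_rel ℂ (P2Rel.r13 (q := q))

lemma wP2_one_mul_wP2_two (q : ℂ) : wP2 q 1 * wP2 q 2 = wP2 q 2 * wP2 q 1 := by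
  simpa [wP2] using RingQuot.mkAlgHom_rel ℂ (P2Rel.r23 (q := q))

def P2Alg.evalW3 (q : ℂ) : P2Alg q →ₐ[ℂ] ℂ :=
  RingQuot.liftAlgHom ℂ ⟨FreeAlgebra.lift ℂ ![0, 0, 1], by rintro _ _ ⟨⟩ <;> simp⟩

lemma P2Alg.evalW3_wP2_two (q : ℂ) : P2Alg.evalW3 q (wP2 q 2) = 1 := by
  simp [P2Alg.evalW3, wP2, RingQuot.liftAlgHom_mkAlgHom_apply]

lemma cMat_wP2_two_sq_eq_zero_iff {q : ℂ} {m n : Type*} (M : Matrix m n ℂ) :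
    cMat M (wP2 q 2 * wP2 q 2) = 0 ↔ M = 0 :=
  cMat_eq_zero_iff (P2Alg.evalW3 q) (by simp [P2Alg.evalW3_wP2_two])

def cMatQuadratic (q : ℂ) {m n : Type*} (X Y Z W : Matrix m n ℂ) : Matrix m n (P2Alg q) :=
  cMat X (wP2 q 2 * wP2 q 2) + cMat Y (wP2 q 2 * wP2 q 0) + cMat Z (wP2 q 2 * wP2 q 1) +
    cMat W (wP2 q 1 * wP2 q 0)

section cMatQuadratic

variable {q : ℂ} {m n : Type*}

lemma cMatQuadratic_add (X Y Z W X' Y' Z' W' : Matrix m n ℂ) :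
    cMatQuadratic q X Y Z W + cMatQuadratic q X' Y' Z' W' =
      cMatQuadratic q (X + X') (Y + Y') (Z + Z') (W + W') := by
  simp only [cMatQuadratic, cMat_add]
  abel

lemma cMatQuadratic_zero (X : Matrix m n ℂ) :
    cMatQuadratic q X 0 0 0 = cMat X (wP2 q 2 * wP2 q 2) := by
  simp [cMatQuadratic]

end cMatQuadratic

section blocks

variable {n : Type*} [Fintype n] [DecidableEq n]

lemma τσ_first_blocks_mul {q : ℂ} (hq : q ≠ 0) (B1 B2 : Matrix n n ℂ) :
    (cMat (-(q ^ 2)⁻¹ • B2) (wP2 q 2) + cMat (-q⁻¹ • (1 : Matrix n n ℂ)) (wP2 q 1)) *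
        (cMat B1 (wP2 q 2) + cMat (q • (1 : Matrix n n ℂ)) (wP2 q 0)) =
      cMatQuadratic q (-(q ^ 2)⁻¹ • (B2 * B1)) (-q⁻¹ • B2) (-q⁻¹ • B1) (-1) := by
  have hq₁ : q * -(q ^ 2)⁻¹ = -q⁻¹ := by field_simp
  have hq₂ : q * -q⁻¹ = -1 := by field_simp
  simp only [add_mul, mul_add, cMat_mul, wP2_one_mul_wP2_two, Matrix.smul_mul, Matrix.mul_smul,
    Matrix.one_mul, Matrix.mul_one, smul_smul, hq₁, hq₂, neg_one_smul, cMatQuadratic]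
  abel

lemma τσ_second_blocks_mul {q : ℂ} (hq : q ≠ 0) (B1 B2 : Matrix n n ℂ) :
    (cMat B1 (wP2 q 2) + cMat (q⁻¹ • (1 : Matrix n n ℂ)) (wP2 q 0)) *
        (cMat B2 (wP2 q 2) + cMat (q⁻¹ • (1 : Matrix n n ℂ)) (wP2 q 1)) =
      cMatQuadratic q (B1 * B2) (q⁻¹ • B2) (q⁻¹ • B1) 1 := by
  have hq₁ : q ^ 2 * (q⁻¹ * q⁻¹) = 1 := by field_simp
  simp only [add_mul, mul_add, cMat_mul, wP2_zero_mul_wP2_two, wP2_zero_mul_wP2_one,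
    cMat_smul_right, Matrix.smul_mul, Matrix.mul_smul, Matrix.one_mul, Matrix.mul_one, smul_smul,
    hq₁, one_smul, cMatQuadratic]
  abel

end blocks

theorem tau_mul_sigma_eq_ADHM_general (q : ℂ) (hq : q ≠ 0) (k r : ℕ)
    (B1 B2 : Matrix (Fin k) (Fin k) ℂ) (I : Matrix (Fin k) (Fin r) ℂ)
    (J : Matrix (Fin r) (Fin k) ℂ) :
    τMat q k r B1 B2 I J * σMat q k r B1 B2 I J
        = cMat (B1 * B2 - (q ^ 2)⁻¹ • (B2 * B1) + I * J) (wP2 q 2 * wP2 q 2) ∧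
      (τMat q k r B1 B2 I J * σMat q k r B1 B2 I J = 0 ↔
        B1 * B2 - (q ^ 2)⁻¹ • (B2 * B1) + I * J = 0) := by
  have hτσ : τMat q k r B1 B2 I J * σMat q k r B1 B2 I J
      = cMat (B1 * B2 - (q ^ 2)⁻¹ • (B2 * B1) + I * J) (wP2 q 2 * wP2 q 2) := by
    rw [τMat, σMat, Matrix.fromCols_mul_fromRows, Matrix.fromCols_mul_fromRows,
      τσ_first_blocks_mul hq, τσ_second_blocks_mul hq, cMat_mul, ← cMatQuadratic_zero,
      cMatQuadratic_add, cMatQuadratic_add, ← cMatQuadratic_zero]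
    congr 1 <;> module
  exact ⟨hτσ, hτσ ▸ cMat_wP2_two_sq_eq_zero_iff _⟩

/-- `τ·σ = (B₁B₂ − q⁻²B₂B₁ + IJ)·w₃²` in `M_{k×k}(A(ℂP²_θ))`; in particular `τ·σ = 0`
iff the braided complex ADHM equation holds. -/
theorem tau_mul_sigma_eq_ADHM (q : ℂ) (hq : q ≠ 0) (k r : ℕ) (hk : 1 ≤ k) (hr : 1 ≤ r)
    (B1 B2 : Matrix (Fin k) (Fin k) ℂ) (I : Matrix (Fin k) (Fin r) ℂ)
    (J : Matrix (Fin r) (Fin k) ℂ) :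
    τMat q k r B1 B2 I J * σMat q k r B1 B2 I J
        = cMat (B1 * B2 - (q ^ 2)⁻¹ • (B2 * B1) + I * J) (wP2 q 2 * wP2 q 2) ∧
      (τMat q k r B1 B2 I J * σMat q k r B1 B2 I J = 0 ↔
        B1 * B2 - (q ^ 2)⁻¹ • (B2 * B1) + I * J = 0) :=
  tau_mul_sigma_eq_ADHM_general q hq k r B1 B2 I J
end
end

section
/- Let (B₁, B₂, I, J) be a stable noncommutative ADHM datum. (a) If ψ ∈ M_{k×k}(ℂ) satisfies ψB₁ − q⁻²B₁ψ = 0, B₂ψ − q⁻²ψB₂ = 0, ψI = 0 and Jψ = 0, then ψ = 0. (b) Consequently the ℂ-linear map dμ_c : M_{k×k}(ℂ) ⊕ M_{k×k}(ℂ) ⊕ M_{k×r}(ℂ) ⊕ M_{r×k}(ℂ) → M_{k×k}(ℂ) defined by dμ_c(b₁, b₂, i, j) = b₁B₂ + B₁b₂ − q⁻²(b₂B₁ + B₂b₁) + iJ + Ij is surjective. -/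
/-!
(a) The twisted commutation relations (with `q ≠ 0`) make `ker ψ` invariant under `B₁` and `B₂`,
and `ψ I = 0` puts `range I` inside it, so stability forces `ker ψ = ℂᵏ`.
(b) The trace pairing identifies square matrices with their dual. A functional vanishing on the
range of `dμ_c` is then `trace (· * ψ)` for a `ψ` satisfying the equations of (a), so it is zero.
-/

noncomputable section

def ADHMStable (k r : ℕ) (B1 B2 : Matrix (Fin k) (Fin k) ℂ)
    (I : Matrix (Fin k) (Fin r) ℂ) : Prop :=
  ∀ V' : Submodule ℂ (Fin k → ℂ),
    (∀ v ∈ V', B1.mulVec v ∈ V') → (∀ v ∈ V', B2.mulVec v ∈ V') →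
    (∀ u : Fin r → ℂ, I.mulVec u ∈ V') → V' = ⊤

open Matrix Module

section

variable {K : Type*} [Field K] {m n : Type*} [Fintype m] [Fintype n]

namespace Matrix

theorem mulVec_mulVec_eq_zero_of_mul_eq_smul_mul {R : Type*} [CommSemiring R]
    {ψ B : Matrix n n R} {c : R} (h : ψ * B = c • (B * ψ)) {v : n → R}
    (hv : ψ *ᵥ v = 0) : ψ *ᵥ (B *ᵥ v) = 0 := by
  rw [mulVec_mulVec, h, smul_mulVec, ← mulVec_mulVec, hv, mulVec_zero, smul_zero]

def traceDual : Matrix n m K →ₗ[K] Dual K (Matrix m n K) :=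
  LinearMap.mk₂ K (fun C X => trace (X * C))
    (fun C C' X => by rw [Matrix.mul_add, trace_add])
    (fun c C X => by rw [Matrix.mul_smul, trace_smul])
    (fun C X X' => by rw [Matrix.add_mul, trace_add])
    (fun c C X => by rw [Matrix.smul_mul, trace_smul])

theorem traceDual_surjective : Function.Surjective (traceDual : Matrix n m K →ₗ[K] _) := by
  have hinj : Function.Injective (traceDual : Matrix n m K →ₗ[K] _) := by
    rw [← LinearMap.ker_eq_bot, LinearMap.ker_eq_bot']
    intro C hC
    rw [ext_iff_trace_mul_left]
    intro X
    simpa [traceDual] using LinearMap.congr_fun hC X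
  refine (LinearMap.injective_iff_surjective_of_finrank_eq_finrank ?_).mp hinj
  rw [Subspace.dual_finrank_eq, finrank_matrix, finrank_matrix]
  ring

theorem exists_eq_trace_mul (φ : Dual K (Matrix m n K)) :
    ∃ C : Matrix n m K, ∀ X, φ X = trace (X * C) := by
  obtain ⟨C, rfl⟩ := traceDual_surjective φ
  exact ⟨C, fun _ => rfl⟩

theorem surjective_of_trace_mul_eq_zero {V : Type*} [AddCommGroup V] [Module K V]
    (L : V →ₗ[K] Matrix m n K)
    (h : ∀ C : Matrix n m K, (∀ v, trace (L v * C) = 0) → C = 0) :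
    Function.Surjective L := by
  rw [← LinearMap.range_eq_top]
  by_contra hne
  obtain ⟨φ, hφ, hrange⟩ :=
    (LinearMap.range L).exists_le_ker_of_lt_top (lt_top_iff_ne_top.mpr hne)
  obtain ⟨C, hC⟩ := exists_eq_trace_mul φ
  have hC0 : C = 0 := h C fun v => by rw [← hC]; exact hrange ⟨v, rfl⟩
  exact hφ (LinearMap.ext fun X => by simp [hC, hC0])

end Matrix

/-- The linearization of `B₁B₂ - c B₂B₁ + IJ = 0` at `(B₁, B₂, I, J)`: the paper's `dμ_c` for
`c = q⁻²`. -/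
def adhmDifferential (c : K) (B1 B2 : Matrix n n K) (I : Matrix n m K) (J : Matrix m n K) :
    (Matrix n n K × Matrix n n K × Matrix n m K × Matrix m n K) →ₗ[K] Matrix n n K where
  toFun p := p.1 * B2 + B1 * p.2.1 - c • (p.2.1 * B1 + B2 * p.1) + p.2.2.1 * J + I * p.2.2.2
  map_add' p p' := by
    simp only [Prod.fst_add, Prod.snd_add, Matrix.add_mul, Matrix.mul_add, smul_add]
    abel
  map_smul' a p := by
    simp only [Prod.smul_fst, Prod.smul_snd, Matrix.smul_mul, Matrix.mul_smul,
      RingHom.id_apply, smul_add, smul_sub, smul_comm c a]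

theorem trace_adhmDifferential_mul (c : K) (B1 B2 : Matrix n n K) (I : Matrix n m K)
    (J : Matrix m n K) (p : Matrix n n K × Matrix n n K × Matrix n m K × Matrix m n K)
    (C : Matrix n n K) :
    trace (adhmDifferential c B1 B2 I J p * C) =
      trace (p.1 * (B2 * C - c • (C * B2))) + trace (p.2.1 * (C * B1 - c • (B1 * C))) +
        trace (p.2.2.1 * (J * C)) + trace (p.2.2.2 * (C * I)) := by
  obtain ⟨b1, b2, i, j⟩ := p
  simp only [adhmDifferential, LinearMap.coe_mk, AddHom.coe_mk, Matrix.add_mul, Matrix.sub_mul,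
    Matrix.mul_sub, Matrix.smul_mul, Matrix.mul_smul, trace_add, trace_sub, trace_smul,
    smul_eq_mul, Matrix.mul_assoc]
  rw [trace_mul_comm B1, trace_mul_comm B2, trace_mul_comm I]
  simp only [Matrix.mul_assoc]
  ring

theorem adhmDifferential_adjoint_eq_zero {c : K} {B1 B2 : Matrix n n K} {I : Matrix n m K}
    {J : Matrix m n K} {C : Matrix n n K}
    (hC : ∀ p, trace (adhmDifferential c B1 B2 I J p * C) = 0) :
    B2 * C - c • (C * B2) = 0 ∧ C * B1 - c • (B1 * C) = 0 ∧ J * C = 0 ∧ C * I = 0 := by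
  simp only [ext_iff_trace_mul_left (B := (0 : Matrix _ _ K)), Matrix.mul_zero, trace_zero]
  refine ⟨fun X => ?_, fun X => ?_, fun X => ?_, fun X => ?_⟩
  · simpa [trace_adhmDifferential_mul] using hC (X, 0, 0, 0)
  · simpa [trace_adhmDifferential_mul] using hC (0, X, 0, 0)
  · simpa [trace_adhmDifferential_mul] using hC (0, 0, X, 0)
  · simpa [trace_adhmDifferential_mul] using hC (0, 0, 0, X)

end

theorem ADHMStable.eq_zero_of_mul_eq_smul_mul {k r : ℕ} {B1 B2 : Matrix (Fin k) (Fin k) ℂ}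
    {I : Matrix (Fin k) (Fin r) ℂ} (hstab : ADHMStable k r B1 B2 I)
    {ψ : Matrix (Fin k) (Fin k) ℂ} {c d : ℂ} (h1 : ψ * B1 = c • (B1 * ψ))
    (h2 : ψ * B2 = d • (B2 * ψ)) (hI : ψ * I = 0) : ψ = 0 := by
  have hker : LinearMap.ker (toLin' ψ) = ⊤ := by
    refine hstab _ (fun v hv => ?_) (fun v hv => ?_) fun u => ?_
    · exact mulVec_mulVec_eq_zero_of_mul_eq_smul_mul h1 hv
    · exact mulVec_mulVec_eq_zero_of_mul_eq_smul_mul h2 hv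
    · rw [LinearMap.mem_ker, toLin'_apply, mulVec_mulVec, hI, zero_mulVec]
  rwa [LinearMap.ker_eq_top, LinearEquiv.map_eq_zero_iff] at hker

theorem dmu_adjoint_injective_and_dmu_surjective_general (q : ℂ) (hq : q ≠ 0) (k r : ℕ)
    (B1 B2 : Matrix (Fin k) (Fin k) ℂ) (I : Matrix (Fin k) (Fin r) ℂ)
    (J : Matrix (Fin r) (Fin k) ℂ)
    (hstab : ADHMStable k r B1 B2 I) :
    (∀ ψ : Matrix (Fin k) (Fin k) ℂ,
        ψ * B1 - (q ^ 2)⁻¹ • (B1 * ψ) = 0 →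
        B2 * ψ - (q ^ 2)⁻¹ • (ψ * B2) = 0 →
        ψ * I = 0 → J * ψ = 0 → ψ = 0) ∧
      Function.Surjective
        (fun p : Matrix (Fin k) (Fin k) ℂ × Matrix (Fin k) (Fin k) ℂ ×
            Matrix (Fin k) (Fin r) ℂ × Matrix (Fin r) (Fin k) ℂ =>
          p.1 * B2 + B1 * p.2.1 - (q ^ 2)⁻¹ • (p.2.1 * B1 + B2 * p.1)
            + p.2.2.1 * J + I * p.2.2.2) := by
  have adjoint_injective : ∀ ψ : Matrix (Fin k) (Fin k) ℂ,
      ψ * B1 - (q ^ 2)⁻¹ • (B1 * ψ) = 0 → B2 * ψ - (q ^ 2)⁻¹ • (ψ * B2) = 0 →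
      ψ * I = 0 → J * ψ = 0 → ψ = 0 := by
    intro ψ h1 h2 hI _
    rw [sub_eq_zero] at h1 h2
    refine hstab.eq_zero_of_mul_eq_smul_mul h1 (d := q ^ 2) ?_ hI
    rw [h2, smul_smul, mul_inv_cancel₀ (pow_ne_zero 2 hq), one_smul]
  refine ⟨adjoint_injective, surjective_of_trace_mul_eq_zero
    (adhmDifferential (q ^ 2)⁻¹ B1 B2 I J) fun C hC => ?_⟩
  obtain ⟨h2, h1, hJ, hI⟩ := adhmDifferential_adjoint_eq_zero hC
  exact adjoint_injective C h1 h2 hI hJ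

/-- (a) For a stable braided ADHM datum, the adjoint of the linearized ADHM equation is
injective; (b) consequently the linearization `dμ_c` of the braided ADHM equation is
surjective (vanishing `H²` of the instanton deformation complex). -/
theorem dmu_adjoint_injective_and_dmu_surjective (q : ℂ) (hq : q ≠ 0) (k r : ℕ)
    (hk : 1 ≤ k) (hr : 1 ≤ r)
    (B1 B2 : Matrix (Fin k) (Fin k) ℂ) (I : Matrix (Fin k) (Fin r) ℂ)
    (J : Matrix (Fin r) (Fin k) ℂ)
    (hstab : ADHMStable k r B1 B2 I) :
    (∀ ψ : Matrix (Fin k) (Fin k) ℂ,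
        ψ * B1 - (q ^ 2)⁻¹ • (B1 * ψ) = 0 →
        B2 * ψ - (q ^ 2)⁻¹ • (ψ * B2) = 0 →
        ψ * I = 0 → J * ψ = 0 → ψ = 0) ∧
      Function.Surjective
        (fun p : Matrix (Fin k) (Fin k) ℂ × Matrix (Fin k) (Fin k) ℂ ×
            Matrix (Fin k) (Fin r) ℂ × Matrix (Fin r) (Fin k) ℂ =>
          p.1 * B2 + B1 * p.2.1 - (q ^ 2)⁻¹ • (p.2.1 * B1 + B2 * p.1)
            + p.2.2.1 * J + I * p.2.2.2) :=
  dmu_adjoint_injective_and_dmu_surjective_general q hq k r B1 B2 I J hstab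
end
end

section
/- Let (B₁, B₂, I, J) be a stable noncommutative ADHM datum. Then the ℂ-linear map dφ : M_{k×k}(ℂ) → M_{k×k}(ℂ) ⊕ M_{k×k}(ℂ) ⊕ M_{k×r}(ℂ) ⊕ M_{r×k}(ℂ) defined by dφ(ξ) = (ξB₁ − B₁ξ, ξB₂ − B₂ξ, ξI, −Jξ) is injective. -/
/-!
If `dφ(ξ) = 0` then `ξ` commutes with `B₁` and `B₂` and kills `range I`, so `ker ξ` is a
`B₁`, `B₂`-invariant subspace containing `range I`. Stability forces `ker ξ = ℂᵏ`, i.e. `ξ = 0`;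
injectivity follows since `dφ` is additive.
-/

noncomputable section

theorem commute_sub_of_mul_sub_mul_eq {R : Type*} [Ring R] {x y b : R}
    (h : x * b - b * x = y * b - b * y) : Commute (x - y) b := by
  rw [Commute, SemiconjBy, sub_mul, mul_sub]
  exact sub_eq_sub_iff_sub_eq_sub.mp h

namespace Matrix

variable {R n : Type*} [CommRing R] [Fintype n]

theorem mulVec_mem_ker_mulVecLin_of_commute {ξ B : Matrix n n R} (h : Commute ξ B)
    {v : n → R} (hv : v ∈ LinearMap.ker ξ.mulVecLin) : B *ᵥ v ∈ LinearMap.ker ξ.mulVecLin := by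
  rw [LinearMap.mem_ker, mulVecLin_apply] at hv ⊢
  rw [mulVec_mulVec, h.eq, ← mulVec_mulVec, hv, mulVec_zero]

theorem eq_zero_of_ker_mulVecLin_eq_top [DecidableEq n] {ξ : Matrix n n R}
    (h : LinearMap.ker ξ.mulVecLin = ⊤) : ξ = 0 := by
  rw [LinearMap.ker_eq_top, ← toLin'_apply'] at h
  exact toLin'.map_eq_zero_iff.mp h

end Matrix

theorem ADHMStable.eq_zero_of_commute {k r : ℕ} {B1 B2 : Matrix (Fin k) (Fin k) ℂ}
    {I : Matrix (Fin k) (Fin r) ℂ} (hstab : ADHMStable k r B1 B2 I)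
    {ξ : Matrix (Fin k) (Fin k) ℂ} (h1 : Commute ξ B1) (h2 : Commute ξ B2) (h3 : ξ * I = 0) :
    ξ = 0 := by
  refine Matrix.eq_zero_of_ker_mulVecLin_eq_top (hstab _ ?_ ?_ fun u => ?_)
  · exact fun v => Matrix.mulVec_mem_ker_mulVecLin_of_commute h1
  · exact fun v => Matrix.mulVec_mem_ker_mulVecLin_of_commute h2
  · rw [LinearMap.mem_ker, Matrix.mulVecLin_apply, Matrix.mulVec_mulVec, h3, Matrix.zero_mulVec]

theorem dphi_injective_general (k r : ℕ)
    (B1 B2 : Matrix (Fin k) (Fin k) ℂ) (I : Matrix (Fin k) (Fin r) ℂ)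
    (J : Matrix (Fin r) (Fin k) ℂ)
    (hstab : ADHMStable k r B1 B2 I) :
    Function.Injective
      (fun ξ : Matrix (Fin k) (Fin k) ℂ =>
        ((ξ * B1 - B1 * ξ, ξ * B2 - B2 * ξ, ξ * I, -(J * ξ)) :
          Matrix (Fin k) (Fin k) ℂ × Matrix (Fin k) (Fin k) ℂ ×
            Matrix (Fin k) (Fin r) ℂ × Matrix (Fin r) (Fin k) ℂ)) := by
  intro x y h
  simp only [Prod.mk.injEq] at h
  obtain ⟨h1, h2, h3, -⟩ := h
  refine sub_eq_zero.mp (hstab.eq_zero_of_commute (commute_sub_of_mul_sub_mul_eq h1)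
    (commute_sub_of_mul_sub_mul_eq h2) ?_)
  rw [Matrix.sub_mul, h3, sub_self]

/-- For a stable noncommutative ADHM datum, the linearization
`dφ(ξ) = (ξB₁ − B₁ξ, ξB₂ − B₂ξ, ξI, −Jξ)` of the `GL_k(ℂ)`-action is injective
(vanishing `H⁰` of the instanton deformation complex). -/
theorem dphi_injective (q : ℂ) (hq : q ≠ 0) (k r : ℕ) (hk : 1 ≤ k) (hr : 1 ≤ r)
    (B1 B2 : Matrix (Fin k) (Fin k) ℂ) (I : Matrix (Fin k) (Fin r) ℂ)
    (J : Matrix (Fin r) (Fin k) ℂ)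
    (hstab : ADHMStable k r B1 B2 I) :
    Function.Injective
      (fun ξ : Matrix (Fin k) (Fin k) ℂ =>
        ((ξ * B1 - B1 * ξ, ξ * B2 - B2 * ξ, ξ * I, -(J * ξ)) :
          Matrix (Fin k) (Fin k) ℂ × Matrix (Fin k) (Fin k) ℂ ×
            Matrix (Fin k) (Fin r) ℂ × Matrix (Fin r) (Fin k) ℂ)) :=
  dphi_injective_general k r B1 B2 I J hstab
end
end

section
/- Fix q ∈ ℂ with q ≠ 0 and integers k ≥ 1, r ≥ 1. For all B₁, B₂, v₁, v₂, ξ ∈ M_{k×k}(ℂ), all I, v_I ∈ M_{k×r}(ℂ) and all J, v_J ∈ M_{r×k}(ℂ), the following trace identity holds: Tr((v₁B₂ + B₁v₂ − q⁻²(v₂B₁ + B₂v₁) + v_I J + I v_J)·ξ) = Tr((ξB₁ − q⁻²B₁ξ)·v₂) − q⁻²·Tr((ξB₂ − q²B₂ξ)·v₁) + Tr((ξI)·v_J) + Tr(v_I·(Jξ)). -/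
/-!
Pairing with `ξ` through the trace turns each summand of `dμ_c(v)` into a summand of `ω(ξ̂, v)`
by cyclicity of the trace. For the `B₂`-terms this produces the twisted commutator
`ξB₂ - q⁻² B₂ξ`, which equals `-q⁻²` times the paper's `ξB₂ - q² B₂ξ` because `q⁻² q² = 1`.
-/

open Matrix

section TwistedCommutator

variable {n R : Type*} [Fintype n] [CommRing R]

theorem Matrix.trace_twistedComm_mul (s : R) (x y ξ : Matrix n n R) :
    trace ((x * y - s • (y * x)) * ξ) = trace ((ξ * x - s • (x * ξ)) * y) := by
  simp only [sub_mul, smul_mul_assoc, trace_sub, trace_smul, Matrix.mul_assoc]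
  rw [trace_mul_comm ξ, trace_mul_comm y, Matrix.mul_assoc, Matrix.mul_assoc]

theorem Matrix.trace_twistedComm_swap_mul {s t : R} (hst : s * t = 1) (x y ξ : Matrix n n R) :
    trace ((y * x - s • (x * y)) * ξ) = -s * trace ((ξ * x - t • (x * ξ)) * y) := by
  have hswap : y * x - s • (x * y) = -s • (x * y - t • (y * x)) := by
    rw [smul_sub, smul_smul, neg_mul, hst]
    module
  rw [hswap, smul_mul_assoc, trace_smul, smul_eq_mul, trace_twistedComm_mul]

end TwistedCommutator

theorem Matrix.trace_add_mul_mul {m n R : Type*} [Fintype m] [Fintype n] [CommSemiring R]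
    (I vI : Matrix m n R) (J vJ : Matrix n m R) (ξ : Matrix m m R) :
    trace ((vI * J + I * vJ) * ξ) = trace (ξ * I * vJ) + trace (vI * (J * ξ)) := by
  rw [add_mul, trace_add, add_comm, Matrix.mul_assoc ξ, trace_mul_comm ξ, Matrix.mul_assoc,
    Matrix.mul_assoc vI]

theorem braided_moment_map_compatibility_general (q : ℂ) (hq : q ≠ 0) (k r : ℕ)
    (B1 B2 v1 v2 ξ : Matrix (Fin k) (Fin k) ℂ)
    (I vI : Matrix (Fin k) (Fin r) ℂ) (J vJ : Matrix (Fin r) (Fin k) ℂ) :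
    Matrix.trace
        ((v1 * B2 + B1 * v2 - (q ^ 2)⁻¹ • (v2 * B1 + B2 * v1) + vI * J + I * vJ) * ξ)
      = Matrix.trace ((ξ * B1 - (q ^ 2)⁻¹ • (B1 * ξ)) * v2)
        - (q ^ 2)⁻¹ * Matrix.trace ((ξ * B2 - q ^ 2 • (B2 * ξ)) * v1)
        + Matrix.trace ((ξ * I) * vJ) + Matrix.trace (vI * (J * ξ)) := by
  have hq2 : (q ^ 2)⁻¹ * q ^ 2 = 1 := inv_mul_cancel₀ (pow_ne_zero 2 hq)
  have hsplit : v1 * B2 + B1 * v2 - (q ^ 2)⁻¹ • (v2 * B1 + B2 * v1) + vI * J + I * vJ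
      = (B1 * v2 - (q ^ 2)⁻¹ • (v2 * B1)) + (v1 * B2 - (q ^ 2)⁻¹ • (B2 * v1))
        + (vI * J + I * vJ) := by
    rw [smul_add]
    abel
  rw [hsplit, add_mul, add_mul, trace_add, trace_add, trace_twistedComm_mul _ B1 v2,
    trace_twistedComm_swap_mul hq2 B2 v1, trace_add_mul_mul]
  ring

/-- The compatibility `⟨dμ_c(v), ξ⟩ = ω(ξ̂, v)` of the braided complex moment map with
the braided symplectic form, written as a trace identity. -/
theorem braided_moment_map_compatibility (q : ℂ) (hq : q ≠ 0) (k r : ℕ)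
    (hk : 1 ≤ k) (hr : 1 ≤ r)
    (B1 B2 v1 v2 ξ : Matrix (Fin k) (Fin k) ℂ)
    (I vI : Matrix (Fin k) (Fin r) ℂ) (J vJ : Matrix (Fin r) (Fin k) ℂ) :
    Matrix.trace
        ((v1 * B2 + B1 * v2 - (q ^ 2)⁻¹ • (v2 * B1 + B2 * v1) + vI * J + I * vJ) * ξ)
      = Matrix.trace ((ξ * B1 - (q ^ 2)⁻¹ • (B1 * ξ)) * v2)
        - (q ^ 2)⁻¹ * Matrix.trace ((ξ * B2 - q ^ 2 • (B2 * ξ)) * v1)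
        + Matrix.trace ((ξ * I) * vJ) + Matrix.trace (vI * (J * ξ)) :=
  braided_moment_map_compatibility_general q hq k r B1 B2 v1 v2 ξ I vI J vJ
end

section
/- Let q ∈ ℂ with q ≠ 0, let r ≥ 1, and let V be a finite-dimensional ℂ-vector space equipped with a direct sum decomposition V = ⊕_{l=1}^r ⊕_{p ∈ ℤ²} V_l(p) with all but finitely many summands zero. Let B₁, B₂ ∈ End_ℂ(V) satisfy B₁(V_l(p)) ⊆ V_l(p − (1,0)) and B₂(V_l(p)) ⊆ V_l(p − (0,1)) for all l and p. Let I₁, …, I_r ∈ V with I_l ∈ V_l(−1,−1), and let J₁, …, J_r : V → ℂ be linear functionals such that J_l vanishes on V_{l'}(p) whenever (l', p) ≠ (l, (0,0)). Assume the braided ADHM equation B₁B₂ − q⁻²B₂B₁ + Σ_{l=1}^r I_l ⊗ J_l = 0 (where I_l ⊗ J_l denotes the endomorphism v ↦ J_l(v)·I_l), and assume stability: the only ℂ-subspace of V invariant under B₁ and B₂ and containing I₁, …, I_r is V itself. Then: (a) J_l = 0 for every l; (b) V_l(p) = 0 unless p₁ ≤ −1 and p₂ ≤ −1; (c) for all integers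 a, b ≥ 0, the space V_l(−1−a, −1−b) is spanned by B₁^a B₂^b I_l, so has dimension at most one; (d) each set λ^l = {(a+1, b+1) : a, b ∈ ℕ, B₁^a B₂^b I_l ≠ 0} is a Young diagram, i.e. if (p₁,p₂) ∈ λ^l and 1 ≤ p₁' ≤ p₁, 1 ≤ p₂' ≤ p₂ then (p₁',p₂') ∈ λ^l; and Σ_{l=1}^r |λ^l| = dim_ℂ V. -/
/-! The weight spaces in the negative quadrant span a subspace that is stable under `B₁`, `B₂`
(which only lower weights) and contains every `I_l`, so by stability it is all of `V`; in
particular `V_l(0,0) = 0` and `J = 0`. The ADHM equation then reads `B₁B₂ = q⁻²B₂B₁`, which makes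
the span of the vectors `B₁^a B₂^b I_l` stable as well, hence equal to `V`. As each of these vectors
lies in the single weight space `V_l(-1-a,-1-b)`, independence of the weight spaces shows that it
spans that space and that the nonzero ones form a basis of `V`; finally `q`-commutation gives
`B₁^a B₂^b I_l ∈ ℂ · B₁^(a-a') B₂^(b-b') B₁^a' B₂^b' I_l`, the Young diagram property. -/

noncomputable section

open Function Set Submodule

theorem iSupIndep.eq_of_le_of_iSup_eq_top {α ι : Type*} [CompleteLattice α] [IsModularLattice α]
    {M S : ι → α} (hM : iSupIndep M) (hle : S ≤ M) (htop : ⨆ i, S i = ⊤) : S = M := by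
  funext i
  refine le_antisymm (hle i) (le_of_eq ?_)
  have hcover : ⊤ ≤ S i ⊔ ⨆ (j) (_ : j ≠ i), M j := by
    rw [← htop, iSup_split_single S i]
    exact sup_le_sup_left (iSup₂_mono fun j _ => hle j) _
  calc M i = (S i ⊔ ⨆ (j) (_ : j ≠ i), M j) ⊓ M i := by
        rw [top_le_iff.mp hcover, top_inf_eq]
    _ = S i ⊔ (⨆ (j) (_ : j ≠ i), M j) ⊓ M i := sup_inf_assoc_of_le _ (hle i)
    _ = S i := by rw [((hM i).symm).eq_bot, sup_bot_eq]

theorem pow_mul_pow_eq_smul_of_mul_eq_smul {R A : Type*} [CommSemiring R] [Semiring A]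
    [Algebra R A] {x y : A} {c : R} (h : x * y = c • (y * x)) (n m : ℕ) :
    x ^ n * y ^ m = c ^ (n * m) • (y ^ m * x ^ n) := by
  have h1 : ∀ m : ℕ, x * y ^ m = c ^ m • (y ^ m * x) := by
    intro m
    induction m with
    | zero => simp
    | succ m ih =>
      rw [pow_succ, ← mul_assoc, ih, smul_mul_assoc, mul_assoc, h, mul_smul_comm, smul_smul,
        ← mul_assoc, ← pow_succ, pow_succ]
  induction n with
  | zero => simp
  | succ n ih =>
    rw [pow_succ, mul_assoc, h1, mul_smul_comm, ← mul_assoc, ih, smul_mul_assoc, smul_smul,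
      mul_assoc, ← pow_succ, ← pow_add, add_mul, one_mul, add_comm]

theorem LinearMap.eq_zero_of_forall_mem_eq_zero {R V N ι : Type*} [Semiring R] [AddCommMonoid V]
    [Module R V] [AddCommMonoid N] [Module R N] {M : ι → Submodule R V} (hM : ⨆ i, M i = ⊤)
    {f : V →ₗ[R] N} (hf : ∀ i, ∀ v ∈ M i, f v = 0) : f = 0 :=
  LinearMap.ker_eq_top.mp <| top_le_iff.mp <| hM ▸ iSup_le fun i v hv => hf i v hv

theorem iSupIndep.eq_span_singleton_of_mem {R V ι κ : Type*} [Ring R] [AddCommGroup V]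
    [Module R V] {M : ι → Submodule R V} {v : κ → V} {w : κ → ι} (hM : iSupIndep M)
    (hw : Injective w) (hv : ∀ k, v k ∈ M (w k)) (hspan : span R (range v) = ⊤) (k : κ) :
    M (w k) = R ∙ v k := by
  let S : ι → Submodule R V := fun i => span R (v '' (w ⁻¹' {i}))
  have hS : S = M := hM.eq_of_le_of_iSup_eq_top
    (fun i => span_le.mpr <| image_subset_iff.mpr fun k hk => (mem_preimage.mp hk) ▸ hv k)
    (by rw [← hspan, ← span_iUnion, ← image_iUnion, ← preimage_iUnion,
      iUnion_singleton_eq_range, range_id', preimage_univ, image_univ])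
  rw [← hS]
  simp only [S, ← image_singleton, hw.preimage_image]

def iSupIndep.basisOfSpanEqTop {K V ι κ : Type*} [DivisionRing K] [AddCommGroup V]
    [Module K V] {M : ι → Submodule K V} {v : κ → V} {w : κ → ι} (hM : iSupIndep M)
    (hw : Injective w) (hv : ∀ k, v k ∈ M (w k)) (hspan : span K (range v) = ⊤) :
    Module.Basis {k // v k ≠ 0} K V :=
  Module.Basis.mk ((hM.comp (hw.comp Subtype.val_injective)).linearIndependent _
    (fun k => hv k.1) fun k => k.2) <| hspan ▸ span_le.mpr <| by
      rintro _ ⟨k, rfl⟩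
      by_cases hk : v k = 0
      · rw [hk]; exact zero_mem _
      · exact subset_span ⟨⟨k, hk⟩, rfl⟩

theorem Nat.card_subtype_prod_eq_sum_ncard {α β : Type*} [Fintype α] (p : α → β → Prop)
    [Finite {x : α × β // p x.1 x.2}] :
    Nat.card {x : α × β // p x.1 x.2} = ∑ a, {b | p a b}.ncard := by
  have e := Equiv.subtypeProdEquivSigmaSubtype p
  have : Finite (Σ a, {b // p a b}) := .of_equiv _ e
  have (a : α) : Finite {b // p a b} :=
    .of_injective (Sigma.mk (β := fun a => {b // p a b}) a) sigma_mk_injective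
  rw [Nat.card_congr e, Nat.card_sigma]
  rfl

theorem Submodule.apply_mem_biSup_of_mapsTo {R V ι : Type*} [Semiring R] [AddCommMonoid V]
    [Module R V] {M : ι → Submodule R V} {s : Set ι} {f : V →ₗ[R] V} (g : ι → ι)
    (hg : MapsTo g s s) (hf : ∀ i ∈ s, ∀ v ∈ M i, f v ∈ M (g i)) :
    ∀ v ∈ ⨆ i ∈ s, M i, f v ∈ ⨆ i ∈ s, M i := fun _ hv =>
  (iSup₂_le fun i hi u hu => le_biSup M (hg hi) (hf i hi u hu) :
    ⨆ i ∈ s, M i ≤ (⨆ i ∈ s, M i).comap f) hv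

section ADHM

variable {R V ι : Type*} [CommSemiring R] [AddCommMonoid V] [Module R V] {B1 B2 : Module.End R V}

def IsADHMStable (B1 B2 : Module.End R V) (I : ι → V) : Prop :=
  ∀ V' : Submodule R V, (∀ v ∈ V', B1 v ∈ V') → (∀ v ∈ V', B2 v ∈ V') → (∀ l, I l ∈ V') →
    V' = ⊤

theorem pow_apply_pow_apply_eq_zero_of_le {c : R} (hcomm : B1 * B2 = c • (B2 * B1)) {v : V}
    {a b a' b' : ℕ} (ha : a' ≤ a) (hb : b' ≤ b) (h : (B1 ^ a') ((B2 ^ b') v) = 0) :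
    (B1 ^ a) ((B2 ^ b) v) = 0 := by
  obtain ⟨m, rfl⟩ := Nat.exists_eq_add_of_le' ha
  obtain ⟨n, rfl⟩ := Nat.exists_eq_add_of_le' hb
  have hswap : (B1 ^ a' * B2 ^ n) ((B2 ^ b') v) =
      c ^ (a' * n) • (B2 ^ n) ((B1 ^ a') ((B2 ^ b') v)) := by
    rw [pow_mul_pow_eq_smul_of_mul_eq_smul hcomm]; rfl
  rw [pow_add, pow_add, Module.End.mul_apply, Module.End.mul_apply,
    ← Module.End.mul_apply (B1 ^ a'), hswap, h, map_zero, smul_zero, map_zero]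

theorem span_range_pow_apply_pow_apply_eq_top {c : R} (hcomm : B2 * B1 = c • (B1 * B2))
    {I : ι → V} (hstab : IsADHMStable B1 B2 I) :
    span R (range fun x : ι × ℕ × ℕ => (B1 ^ x.2.1) ((B2 ^ x.2.2) (I x.1))) = ⊤ := by
  set E := fun x : ι × ℕ × ℕ => (B1 ^ x.2.1) ((B2 ^ x.2.2) (I x.1))
  have hinv (B : Module.End R V) (hB : ∀ x, B (E x) ∈ span R (range E)) :
      ∀ v ∈ span R (range E), B v ∈ span R (range E) := fun _ hv =>
    (span_le (p := (span R (range E)).comap B)).mpr (range_subset_iff.mpr hB) hv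
  refine hstab _ (hinv B1 fun ⟨l, a, b⟩ => ?_) (hinv B2 fun ⟨l, a, b⟩ => ?_) fun l => ?_
  · exact subset_span ⟨(l, a + 1, b), by simp [E, pow_succ']⟩
  · have hswap : B2 (E (l, a, b)) = c ^ a • E (l, a, b + 1) := by
      have := pow_mul_pow_eq_smul_of_mul_eq_smul hcomm 1 a
      rw [pow_one, one_mul] at this
      simp only [E, pow_succ', Module.End.mul_apply]
      rw [← Module.End.mul_apply B2, this]
      rfl
    exact hswap ▸ smul_mem _ _ (subset_span ⟨(l, a, b + 1), rfl⟩)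
  · exact subset_span ⟨(l, 0, 0), by simp [E]⟩

variable {W : ι → ℤ × ℤ → Submodule R V}

theorem pow_apply_pow_apply_mem (hB1 : ∀ l p, ∀ v ∈ W l p, B1 v ∈ W l (p.1 - 1, p.2))
    (hB2 : ∀ l p, ∀ v ∈ W l p, B2 v ∈ W l (p.1, p.2 - 1)) {l : ι} {p : ℤ × ℤ} {v : V}
    (hv : v ∈ W l p) (a b : ℕ) : (B1 ^ a) ((B2 ^ b) v) ∈ W l (p.1 - a, p.2 - b) := by
  have hb : ∀ b : ℕ, (B2 ^ b) v ∈ W l (p.1, p.2 - b) := by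
    intro b
    induction b with
    | zero => simpa using hv
    | succ b ih =>
      rw [pow_succ', Module.End.mul_apply]
      convert hB2 _ _ _ ih using 3
      push_cast; ring
  induction a with
  | zero => simpa using hb b
  | succ a ih =>
    rw [pow_succ', Module.End.mul_apply]
    convert hB1 _ _ _ ih using 3
    push_cast; ring

theorem eq_bot_of_not_le_neg_one (hW : iSupIndep fun lp : ι × (ℤ × ℤ) => W lp.1 lp.2)
    (hB1 : ∀ l p, ∀ v ∈ W l p, B1 v ∈ W l (p.1 - 1, p.2))
    (hB2 : ∀ l p, ∀ v ∈ W l p, B2 v ∈ W l (p.1, p.2 - 1)) {I : ι → V}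
    (hI : ∀ l, I l ∈ W l (-1, -1)) (hstab : IsADHMStable B1 B2 I) (l : ι) (p : ℤ × ℤ)
    (hp : ¬(p.1 ≤ -1 ∧ p.2 ≤ -1)) : W l p = ⊥ := by
  let s : Set (ι × (ℤ × ℤ)) := {lp | lp.2.1 ≤ -1 ∧ lp.2.2 ≤ -1}
  have hU : ⨆ lp ∈ s, W lp.1 lp.2 = ⊤ := hstab _
    (apply_mem_biSup_of_mapsTo (fun lp => (lp.1, (lp.2.1 - 1, lp.2.2)))
      (fun _ h => ⟨by linarith [h.1], h.2⟩) fun lp _ => hB1 lp.1 lp.2)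
    (apply_mem_biSup_of_mapsTo (fun lp => (lp.1, (lp.2.1, lp.2.2 - 1)))
      (fun _ h => ⟨h.1, by linarith [h.2]⟩) fun lp _ => hB2 lp.1 lp.2)
    fun l => le_biSup (fun lp => W lp.1 lp.2) (show (l, (-1, -1)) ∈ s from ⟨le_rfl, le_rfl⟩)
      (hI l)
  exact (hW.disjoint_biSup (y := s) (x := (l, p)) hp).eq_bot_of_le (hU ▸ le_top)

end ADHM

theorem torus_fixed_points_are_Young_diagrams_general (q : ℂ) (hq : q ≠ 0) (r : ℕ)
    (V : Type) [AddCommGroup V] [Module ℂ V] [FiniteDimensional ℂ V]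
    (W : Fin r → ℤ × ℤ → Submodule ℂ V)
    (hinternal : DirectSum.IsInternal (fun lp : Fin r × (ℤ × ℤ) => W lp.1 lp.2))
    (B1 B2 : Module.End ℂ V)
    (hB1 : ∀ (l : Fin r) (p : ℤ × ℤ), ∀ v ∈ W l p, B1 v ∈ W l (p.1 - 1, p.2))
    (hB2 : ∀ (l : Fin r) (p : ℤ × ℤ), ∀ v ∈ W l p, B2 v ∈ W l (p.1, p.2 - 1))
    (I : Fin r → V) (hI : ∀ l, I l ∈ W l (-1, -1))
    (J : Fin r → (V →ₗ[ℂ] ℂ))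
    (hJ : ∀ (l l' : Fin r) (p : ℤ × ℤ), (l', p) ≠ (l, (0, 0)) → ∀ v ∈ W l' p, J l v = 0)
    (hADHM : ∀ v : V, B1 (B2 v) - (q ^ 2)⁻¹ • B2 (B1 v) + ∑ l, J l v • I l = 0)
    (hstab : ∀ V' : Submodule ℂ V, (∀ v ∈ V', B1 v ∈ V') → (∀ v ∈ V', B2 v ∈ V') →
      (∀ l, I l ∈ V') → V' = ⊤) :
    (∀ l, J l = 0) ∧
      (∀ (l : Fin r) (p : ℤ × ℤ), ¬(p.1 ≤ -1 ∧ p.2 ≤ -1) → W l p = ⊥) ∧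
      (∀ (l : Fin r) (a b : ℕ),
        W l (-1 - (a : ℤ), -1 - (b : ℤ))
          = Submodule.span ℂ {(B1 ^ a) ((B2 ^ b) (I l))}) ∧
      (∀ (l : Fin r) (a b a' b' : ℕ), a' ≤ a → b' ≤ b →
        (B1 ^ a) ((B2 ^ b) (I l)) ≠ 0 → (B1 ^ a') ((B2 ^ b') (I l)) ≠ 0) ∧
      ∑ l, Set.ncard {ab : ℕ × ℕ | (B1 ^ ab.1) ((B2 ^ ab.2) (I l)) ≠ 0}
        = Module.finrank ℂ V := by
  have hW := hinternal.submodule_iSupIndep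
  have hquad := eq_bot_of_not_le_neg_one hW hB1 hB2 hI hstab
  have hJ0 (l : Fin r) : J l = 0 :=
    LinearMap.eq_zero_of_forall_mem_eq_zero hinternal.submodule_iSup_eq_top fun lp v hv => by
      by_cases h : lp = (l, (0, 0))
      · rw [h, hquad l (0, 0) (by norm_num), mem_bot] at hv
        rw [hv, map_zero]
      · exact hJ l lp.1 lp.2 h v hv
  have hcomm : B1 * B2 = (q ^ 2)⁻¹ • (B2 * B1) :=
    LinearMap.ext fun v => by simpa [hJ0, sub_eq_zero] using hADHM v
  have hcomm' : B2 * B1 = q ^ 2 • (B1 * B2) := by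
    rw [hcomm, smul_smul, mul_inv_cancel₀ (pow_ne_zero 2 hq), one_smul]
  let wt (x : Fin r × ℕ × ℕ) : Fin r × (ℤ × ℤ) :=
    (x.1, (-1 - (x.2.1 : ℤ), -1 - (x.2.2 : ℤ)))
  have hwt : Injective wt := fun x y h => by
    simp only [wt, Prod.mk.injEq] at h
    ext <;> omega
  have hmem (x : Fin r × ℕ × ℕ) := pow_apply_pow_apply_mem hB1 hB2 (hI x.1) x.2.1 x.2.2
  have hspan := span_range_pow_apply_pow_apply_eq_top hcomm' hstab
  let basis := hW.basisOfSpanEqTop hwt hmem hspan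
  have := Module.Finite.finite_basis basis
  refine ⟨hJ0, hquad, fun l a b => hW.eq_span_singleton_of_mem hwt hmem hspan (l, a, b),
    fun l a b a' b' ha hb => mt (pow_apply_pow_apply_eq_zero_of_le hcomm ha hb), ?_⟩
  rw [Module.finrank_eq_nat_card_basis basis]
  exact (Nat.card_subtype_prod_eq_sum_ncard _).symm

/-- Classification of torus-fixed points of the instanton moduli space: given a weight
decomposition `V = ⊕_{l,p} V_l(p)` compatible with a stable braided ADHM datum, one has
`J = 0`, the weights are supported in the negative quadrant, each weight space is spanned
by `B₁^a B₂^b I_l`, the resulting sets are Young diagrams, and their total size is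
`dim ℂ V`. -/
theorem torus_fixed_points_are_Young_diagrams (q : ℂ) (hq : q ≠ 0) (r : ℕ) (hr : 1 ≤ r)
    (V : Type) [AddCommGroup V] [Module ℂ V] [FiniteDimensional ℂ V]
    (W : Fin r → ℤ × ℤ → Submodule ℂ V)
    (hinternal : DirectSum.IsInternal (fun lp : Fin r × (ℤ × ℤ) => W lp.1 lp.2))
    (hfin : {lp : Fin r × (ℤ × ℤ) | W lp.1 lp.2 ≠ ⊥}.Finite)
    (B1 B2 : Module.End ℂ V)
    (hB1 : ∀ (l : Fin r) (p : ℤ × ℤ), ∀ v ∈ W l p, B1 v ∈ W l (p.1 - 1, p.2))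
    (hB2 : ∀ (l : Fin r) (p : ℤ × ℤ), ∀ v ∈ W l p, B2 v ∈ W l (p.1, p.2 - 1))
    (I : Fin r → V) (hI : ∀ l, I l ∈ W l (-1, -1))
    (J : Fin r → (V →ₗ[ℂ] ℂ))
    (hJ : ∀ (l l' : Fin r) (p : ℤ × ℤ), (l', p) ≠ (l, (0, 0)) → ∀ v ∈ W l' p, J l v = 0)
    (hADHM : ∀ v : V, B1 (B2 v) - (q ^ 2)⁻¹ • B2 (B1 v) + ∑ l, J l v • I l = 0)
    (hstab : ∀ V' : Submodule ℂ V, (∀ v ∈ V', B1 v ∈ V') → (∀ v ∈ V', B2 v ∈ V') →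
      (∀ l, I l ∈ V') → V' = ⊤) :
    (∀ l, J l = 0) ∧
      (∀ (l : Fin r) (p : ℤ × ℤ), ¬(p.1 ≤ -1 ∧ p.2 ≤ -1) → W l p = ⊥) ∧
      (∀ (l : Fin r) (a b : ℕ),
        W l (-1 - (a : ℤ), -1 - (b : ℤ))
          = Submodule.span ℂ {(B1 ^ a) ((B2 ^ b) (I l))}) ∧
      (∀ (l : Fin r) (a b a' b' : ℕ), a' ≤ a → b' ≤ b →
        (B1 ^ a) ((B2 ^ b) (I l)) ≠ 0 → (B1 ^ a') ((B2 ^ b') (I l)) ≠ 0) ∧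
      ∑ l, Set.ncard {ab : ℕ × ℕ | (B1 ^ ab.1) ((B2 ^ ab.2) (I l)) ≠ 0}
        = Module.finrank ℂ V :=
  torus_fixed_points_are_Young_diagrams_general q hq r V W hinternal B1 B2 hB1 hB2 I hI J hJ hADHM
    hstab
end
end

section
/- Let q ∈ ℂ with q ≠ 0 and let A = A(Gr_θ(2;4)). Then: (i) the image of Λ³⁴ is a central element of A, so its non-negative powers form a left and right denominator (Ore) set; (ii) in the localization A[(Λ³⁴)⁻¹], the elements ξ₁ = −Λ¹⁴(Λ³⁴)⁻¹, ξ₂ = −Λ²⁴(Λ³⁴)⁻¹, ξ̄₁ = Λ²³(Λ³⁴)⁻¹, ξ̄₂ = Λ¹³(Λ³⁴)⁻¹ satisfy the relations ξ₁ξ̄₁ = q²ξ̄₁ξ₁, ξ₂ξ̄₂ = q⁻²ξ̄₂ξ₂, ξ₁ξ₂ = q²ξ₂ξ₁, ξ̄₁ξ̄₂ = q⁻²ξ̄₂ξ̄₁, ξ₁ξ̄₂ = ξ̄₂ξ₁, ξ₂ξ̄₁ = ξ̄₁ξ₂, and moreover q·Λ¹²(Λ³⁴)⁻¹ = ξ₁ξ̄₁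 − ξ̄₂ξ₂; (iii) the unital ℂ-subalgebra of A[(Λ³⁴)⁻¹] generated by ξ₁, ξ₂, ξ̄₁, ξ̄₂ is isomorphic, via x₁ ↦ ξ₁, x₂ ↦ ξ₂, y₁ ↦ ξ̄₁, y₂ ↦ ξ̄₂, to the quotient of the free ℂ-algebra on x₁, x₂, y₁, y₂ by the ideal generated by x₁y₁ − q²y₁x₁, x₂y₂ − q⁻²y₂x₂, x₁x₂ − q²x₂x₁, y₁y₂ − q⁻²y₂y₁, x₁y₂ − y₂x₁, x₂y₁ − y₁x₂. -/
noncomputable section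

open FreeAlgebra

/-- The relations of the homogeneous coordinate algebra `A(Gr_θ(2;4))` of the
noncommutative Klein quadric, on six generators indexed by `0 ↦ Λ¹², 1 ↦ Λ¹³, 2 ↦ Λ¹⁴,
3 ↦ Λ²³, 4 ↦ Λ²⁴, 5 ↦ Λ³⁴`. -/
inductive GrRel (q : ℂ) : FreeAlgebra ℂ (Fin 6) → FreeAlgebra ℂ (Fin 6) → Prop
  | r12_13 : GrRel q (ι ℂ 0 * ι ℂ 1) ((q ^ 2)⁻¹ • (ι ℂ 1 * ι ℂ 0))
  | r12_14 : GrRel q (ι ℂ 0 * ι ℂ 2) ((q ^ 2)⁻¹ • (ι ℂ 2 * ι ℂ 0))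
  | r12_23 : GrRel q (ι ℂ 0 * ι ℂ 3) (q ^ 2 • (ι ℂ 3 * ι ℂ 0))
  | r12_24 : GrRel q (ι ℂ 0 * ι ℂ 4) (q ^ 2 • (ι ℂ 4 * ι ℂ 0))
  | r13_23 : GrRel q (ι ℂ 1 * ι ℂ 3) (q ^ 2 • (ι ℂ 3 * ι ℂ 1))
  | r13_24 : GrRel q (ι ℂ 1 * ι ℂ 4) (q ^ 2 • (ι ℂ 4 * ι ℂ 1))
  | r14_23 : GrRel q (ι ℂ 2 * ι ℂ 3) (q ^ 2 • (ι ℂ 3 * ι ℂ 2))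
  | r14_24 : GrRel q (ι ℂ 2 * ι ℂ 4) (q ^ 2 • (ι ℂ 4 * ι ℂ 2))
  | central34 (i : Fin 6) : GrRel q (ι ℂ 5 * ι ℂ i) (ι ℂ i * ι ℂ 5)
  | r13_14 : GrRel q (ι ℂ 1 * ι ℂ 2) (ι ℂ 2 * ι ℂ 1)
  | r23_24 : GrRel q (ι ℂ 3 * ι ℂ 4) (ι ℂ 4 * ι ℂ 3)
  | pluecker : GrRel q (ι ℂ 0 * ι ℂ 5) (q⁻¹ • (ι ℂ 1 * ι ℂ 4) - q • (ι ℂ 3 * ι ℂ 2))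

/-- The homogeneous coordinate algebra `A = A(Gr_θ(2;4))`. -/
abbrev GrAlg (q : ℂ) := RingQuot (GrRel q)

/-- The images of the minors: `Λm q 0 = Λ¹², Λm q 1 = Λ¹³, Λm q 2 = Λ¹⁴, Λm q 3 = Λ²³,
`Λm q 4 = Λ²⁴`, `Λm q 5 = Λ³⁴`. -/
def Λm (q : ℂ) (i : Fin 6) : GrAlg q := RingQuot.mkAlgHom ℂ (GrRel q) (ι ℂ i)

/-- The relations presenting the coordinate algebra `A(ℝ⁴_θ)` of the affine chart of the
noncommutative four-sphere, on generators `0 ↦ x₁, 1 ↦ x₂, 2 ↦ y₁, 3 ↦ y₂`. -/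
inductive R4Rel (q : ℂ) : FreeAlgebra ℂ (Fin 4) → FreeAlgebra ℂ (Fin 4) → Prop
  | x1y1 : R4Rel q (ι ℂ 0 * ι ℂ 2) (q ^ 2 • (ι ℂ 2 * ι ℂ 0))
  | x2y2 : R4Rel q (ι ℂ 1 * ι ℂ 3) ((q ^ 2)⁻¹ • (ι ℂ 3 * ι ℂ 1))
  | x1x2 : R4Rel q (ι ℂ 0 * ι ℂ 1) (q ^ 2 • (ι ℂ 1 * ι ℂ 0))
  | y1y2 : R4Rel q (ι ℂ 2 * ι ℂ 3) ((q ^ 2)⁻¹ • (ι ℂ 3 * ι ℂ 2))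
  | x1y2 : R4Rel q (ι ℂ 0 * ι ℂ 3) (ι ℂ 3 * ι ℂ 0)
  | x2y1 : R4Rel q (ι ℂ 1 * ι ℂ 2) (ι ℂ 2 * ι ℂ 1)

/-- The coordinate algebra `A(ℝ⁴_θ)` presented by generators and relations. -/
abbrev R4Alg (q : ℂ) := RingQuot (R4Rel q)

/-- The generators of `A(ℝ⁴_θ)`. -/
def xg (q : ℂ) (i : Fin 4) : R4Alg q := RingQuot.mkAlgHom ℂ (R4Rel q) (ι ℂ i)

/-! Since `Λ³⁴` is central, the Plücker relation divided by `(Λ³⁴)²` expresses `Λ¹²(Λ³⁴)⁻¹`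
through the four other affine coordinates `ξ₁, ξ₂, ξ̄₁, ξ̄₂`, and these satisfy the defining
relations of `A(ℝ⁴_θ)`. This gives an algebra map `A(ℝ⁴_θ) → A[(Λ³⁴)⁻¹]` onto the subalgebra
they generate. It is injective because it has a left inverse: dehomogenization
`A → A(ℝ⁴_θ)`, sending `Λ³⁴ ↦ 1`, extends to the localization by its universal property. -/

def QCommute {R A : Type*} [CommSemiring R] [Semiring A] [Algebra R A] (t : R) (a b : A) :
    Prop :=
  a * b = t • (b * a)

namespace QCommute

variable {R A B : Type*} [CommSemiring R] [Semiring A] [Algebra R A] [Semiring B] [Algebra R B]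
  {t : R} {a b : A}

theorem eq (h : QCommute t a b) : a * b = t • (b * a) := h

theorem mul_mul_left (h : QCommute t a b) (x : A) : a * (b * x) = t • (b * (a * x)) := by
  rw [← mul_assoc, h.eq, smul_mul_assoc, mul_assoc]

theorem map (h : QCommute t a b) (f : A →ₐ[R] B) : QCommute t (f a) (f b) := by
  rw [QCommute, ← map_mul, h, map_smul, map_mul]

theorem mul_right_of_commute {v : A} (h : QCommute t a b) (ha : Commute v a)
    (hb : Commute v b) : QCommute t (a * v) (b * v) := by
  have key : ∀ {x y : A}, Commute v y → x * v * (y * v) = x * y * (v * v) := fun hy => by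
    rw [mul_assoc, ← mul_assoc v, hy.eq, mul_assoc, mul_assoc]
  rw [QCommute, key hb, key ha, h, smul_mul_assoc]

end QCommute

theorem QCommute.neg_left {R A : Type*} [CommRing R] [Ring A] [Algebra R A] {t : R} {a b : A}
    (h : QCommute t a b) : QCommute t (-a) b := by
  rw [QCommute, neg_mul, mul_neg, smul_neg, h]

theorem QCommute.neg_right {R A : Type*} [CommRing R] [Ring A] [Algebra R A] {t : R}
    {a b : A} (h : QCommute t a b) : QCommute t a (-b) := by
  rw [QCommute, neg_mul, mul_neg, smul_neg, h]

theorem QCommute.symm {K A : Type*} [Field K] [Semiring A] [Algebra K A] {t : K} {a b : A}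
    (h : QCommute t a b) (ht : t ≠ 0) : QCommute t⁻¹ b a := by
  rw [QCommute, h, smul_smul, inv_mul_cancel₀ ht, one_smul]

abbrev OreLocalization.oreSetOfLeCenter {R : Type*} [Monoid R] {S : Submonoid R}
    (hS : S ≤ Submonoid.center R) : OreLocalization.OreSet S where
  ore_right_cancel r₁ r₂ s h :=
    ⟨s, by rw [← Submonoid.mem_center_iff.mp (hS s.2), h, Submonoid.mem_center_iff.mp (hS s.2)]⟩
  oreNum r _ := r
  oreDenom _ s := s
  ore_eq r s := (Submonoid.mem_center_iff.mp (hS s.2) r).symm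

theorem RingQuot.range_liftAlgHom {R A B : Type*} [CommSemiring R] [Semiring A] [Algebra R A]
    [Semiring B] [Algebra R B] {s : A → A → Prop} (f : A →ₐ[R] B)
    (w : ∀ ⦃x y⦄, s x y → f x = f y) : (RingQuot.liftAlgHom R ⟨f, w⟩).range = f.range := by
  have hf : (RingQuot.liftAlgHom R ⟨f, w⟩).comp (RingQuot.mkAlgHom R s) = f :=
    AlgHom.ext (RingQuot.liftAlgHom_mkAlgHom_apply R f w)
  conv_rhs => rw [← hf]
  rw [AlgHom.range_comp, (AlgHom.range_eq_top _).mpr (RingQuot.mkAlgHom_surjective R s),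
    Algebra.map_top]

section Grassmannian

variable (q : ℂ)

theorem commute_Λm_five (a : GrAlg q) : Commute (Λm q 5) a := by
  obtain ⟨x, rfl⟩ := RingQuot.mkAlgHom_surjective ℂ (GrRel q) a
  induction x using FreeAlgebra.induction with
  | grade0 r => simp only [AlgHom.commutes, Algebra.commute_algebraMap_right]
  | grade1 i =>
    simpa [Λm, Commute, SemiconjBy] using RingQuot.mkAlgHom_rel ℂ (GrRel.central34 (q := q) i)
  | mul x y hx hy => rw [map_mul]; exact hx.mul_right hy
  | add x y hx hy => rw [map_add]; exact hx.add_right hy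

theorem Λm_two_qcommute_three : QCommute (q ^ 2) (Λm q 2) (Λm q 3) := by
  simpa [Λm, QCommute] using RingQuot.mkAlgHom_rel ℂ (GrRel.r14_23 (q := q))

theorem Λm_one_qcommute_four : QCommute (q ^ 2) (Λm q 1) (Λm q 4) := by
  simpa [Λm, QCommute] using RingQuot.mkAlgHom_rel ℂ (GrRel.r13_24 (q := q))

theorem Λm_two_qcommute_four : QCommute (q ^ 2) (Λm q 2) (Λm q 4) := by
  simpa [Λm, QCommute] using RingQuot.mkAlgHom_rel ℂ (GrRel.r14_24 (q := q))

theorem Λm_one_qcommute_three : QCommute (q ^ 2) (Λm q 1) (Λm q 3) := by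
  simpa [Λm, QCommute] using RingQuot.mkAlgHom_rel ℂ (GrRel.r13_23 (q := q))

theorem commute_Λm_one_two : Commute (Λm q 1) (Λm q 2) := by
  simpa [Λm, Commute, SemiconjBy] using RingQuot.mkAlgHom_rel ℂ (GrRel.r13_14 (q := q))

theorem commute_Λm_three_four : Commute (Λm q 3) (Λm q 4) := by
  simpa [Λm, Commute, SemiconjBy] using RingQuot.mkAlgHom_rel ℂ (GrRel.r23_24 (q := q))

theorem Λm_zero_mul_five :
    Λm q 0 * Λm q 5 = q⁻¹ • (Λm q 1 * Λm q 4) - q • (Λm q 3 * Λm q 2) := by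
  simpa [Λm] using RingQuot.mkAlgHom_rel ℂ (GrRel.pluecker (q := q))

theorem powers_Λm_five_le_center : Submonoid.powers (Λm q 5) ≤ Submonoid.center (GrAlg q) :=
  Submonoid.powers_le.mpr (Submonoid.mem_center_iff.mpr fun a => (commute_Λm_five q a).symm)

variable {q}

theorem smul_Λm_zero_mul_five (hq : q ≠ 0) :
    q • (Λm q 0 * Λm q 5) = Λm q 1 * Λm q 4 - Λm q 2 * Λm q 3 := by
  rw [Λm_zero_mul_five, smul_sub, smul_smul, mul_inv_cancel₀ hq, one_smul, smul_smul, ← sq,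
    (Λm_two_qcommute_three q).eq]

end Grassmannian

section R4

variable (q : ℂ)

theorem xg_zero_qcommute_two : QCommute (q ^ 2) (xg q 0) (xg q 2) := by
  simpa [xg, QCommute] using RingQuot.mkAlgHom_rel ℂ (R4Rel.x1y1 (q := q))

theorem xg_one_qcommute_three : QCommute (q ^ 2)⁻¹ (xg q 1) (xg q 3) := by
  simpa [xg, QCommute] using RingQuot.mkAlgHom_rel ℂ (R4Rel.x2y2 (q := q))

theorem xg_zero_qcommute_one : QCommute (q ^ 2) (xg q 0) (xg q 1) := by
  simpa [xg, QCommute] using RingQuot.mkAlgHom_rel ℂ (R4Rel.x1x2 (q := q))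

theorem xg_two_qcommute_three : QCommute (q ^ 2)⁻¹ (xg q 2) (xg q 3) := by
  simpa [xg, QCommute] using RingQuot.mkAlgHom_rel ℂ (R4Rel.y1y2 (q := q))

theorem commute_xg_zero_three : Commute (xg q 0) (xg q 3) := by
  simpa [xg, Commute, SemiconjBy] using RingQuot.mkAlgHom_rel ℂ (R4Rel.x1y2 (q := q))

theorem commute_xg_one_two : Commute (xg q 1) (xg q 2) := by
  simpa [xg, Commute, SemiconjBy] using RingQuot.mkAlgHom_rel ℂ (R4Rel.x2y1 (q := q))

/-- The image of `Λ¹²` is forced by the Plücker relation. -/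
def dehomogenizeGen : Fin 6 → R4Alg q :=
  ![q⁻¹ • (xg q 0 * xg q 2 - xg q 3 * xg q 1), xg q 3, (-1 : ℂ) • xg q 0, xg q 2,
    (-1 : ℂ) • xg q 1, 1]

variable {q}

theorem dehomogenizeGen_rel (hq : q ≠ 0) ⦃x y : FreeAlgebra ℂ (Fin 6)⦄ (h : GrRel q x y) :
    FreeAlgebra.lift ℂ (dehomogenizeGen q) x = FreeAlgebra.lift ℂ (dehomogenizeGen q) y := by
  -- the relations of `A(ℝ⁴_θ)` order every monomial as `y₂ < y₁ < x₂ < x₁`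
  induction h <;>
    simp only [dehomogenizeGen, map_mul, map_smul, map_sub, FreeAlgebra.lift_ι_apply,
      Matrix.cons_val, mul_one, one_mul, sub_mul, mul_sub, smul_sub, smul_smul, smul_mul_assoc,
      mul_smul_comm, mul_assoc, (xg_zero_qcommute_two q).eq, (xg_one_qcommute_three q).eq,
      (xg_zero_qcommute_one q).eq, (xg_two_qcommute_three q).eq, (commute_xg_zero_three q).eq,
      (commute_xg_one_two q).eq, (xg_zero_qcommute_two q).mul_mul_left,
      (xg_one_qcommute_three q).mul_mul_left, (xg_two_qcommute_three q).mul_mul_left,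
      (commute_xg_zero_three q).left_comm, (commute_xg_one_two q).left_comm] <;>
    match_scalars <;> field_simp

def dehomogenize (hq : q ≠ 0) : GrAlg q →ₐ[ℂ] R4Alg q :=
  RingQuot.liftAlgHom ℂ ⟨FreeAlgebra.lift ℂ (dehomogenizeGen q), dehomogenizeGen_rel hq⟩

theorem dehomogenize_Λm (hq : q ≠ 0) (i : Fin 6) :
    dehomogenize hq (Λm q i) = dehomogenizeGen q i := by
  rw [dehomogenize, Λm, RingQuot.liftAlgHom_mkAlgHom_apply, FreeAlgebra.lift_ι_apply]

theorem dehomogenize_Λm_five (hq : q ≠ 0) : dehomogenize hq (Λm q 5) = 1 :=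
  dehomogenize_Λm hq 5

end R4

section Chart

variable {q : ℂ} {Loc : Type*} [Ring Loc] [Algebra ℂ Loc] (φ : GrAlg q →ₐ[ℂ] Loc) (v : Loc)

theorem commute_inv_map_Λm_five (hv : φ (Λm q 5) * v = 1) (hv' : v * φ (Λm q 5) = 1)
    (a : GrAlg q) : Commute v (φ a) :=
  Commute.units_inv_left (u := ⟨φ (Λm q 5), v, hv, hv'⟩) ((commute_Λm_five q a).map φ)

/-- The affine coordinates `ξ₁, ξ₂, ξ̄₁, ξ̄₂` of the chart `Λ³⁴ ≠ 0`. -/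
def chartCoord : Fin 4 → Loc :=
  ![-(φ (Λm q 2) * v), -(φ (Λm q 4) * v), φ (Λm q 3) * v, φ (Λm q 1) * v]

variable {φ v}

theorem chartCoord_rel (hq : q ≠ 0) (hvc : ∀ a, Commute v (φ a)) ⦃x y : FreeAlgebra ℂ (Fin 4)⦄
    (h : R4Rel q x y) :
    FreeAlgebra.lift ℂ (chartCoord φ v) x = FreeAlgebra.lift ℂ (chartCoord φ v) y := by
  have hq2 : q ^ 2 ≠ 0 := pow_ne_zero 2 hq
  have qcomm {t : ℂ} {i j : Fin 6} (h : QCommute t (Λm q i) (Λm q j)) :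
      QCommute t (φ (Λm q i) * v) (φ (Λm q j) * v) :=
    (h.map φ).mul_right_of_commute (hvc _) (hvc _)
  have comm {i j : Fin 6} (h : Commute (Λm q i) (Λm q j)) :
      Commute (φ (Λm q i) * v) (φ (Λm q j) * v) :=
    ((h.map φ).mul_right (hvc _).symm).mul_left ((hvc _).mul_right (Commute.refl v))
  induction h <;> simp only [map_mul, map_smul, FreeAlgebra.lift_ι_apply, chartCoord,
    Matrix.cons_val]
  case x1y1 => exact (qcomm (Λm_two_qcommute_three q)).neg_left
  case x2y2 => exact (qcomm ((Λm_one_qcommute_four q).symm hq2)).neg_left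
  case x1x2 => exact (qcomm (Λm_two_qcommute_four q)).neg_left.neg_right
  case y1y2 => exact qcomm ((Λm_one_qcommute_three q).symm hq2)
  case x1y2 => exact (comm (commute_Λm_one_two q).symm).neg_left
  case x2y1 => exact (comm (commute_Λm_three_four q).symm).neg_left

theorem smul_map_Λm_zero_mul (hq : q ≠ 0) (hv : φ (Λm q 5) * v = 1)
    (hvc : ∀ a, Commute v (φ a)) :
    q • (φ (Λm q 0) * v) =
      chartCoord φ v 0 * chartCoord φ v 2 - chartCoord φ v 3 * chartCoord φ v 1 := by
  have mul_mul_right (a b : GrAlg q) : φ a * v * (φ b * v) = φ (a * b) * (v * v) := by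
    rw [mul_assoc, ← mul_assoc v, (hvc b).eq, map_mul, mul_assoc, mul_assoc]
  have h0 : φ (Λm q 0) * v = φ (Λm q 0 * Λm q 5) * (v * v) := by
    rw [map_mul, mul_assoc, ← mul_assoc _ v, hv, one_mul]
  simp only [chartCoord, Matrix.cons_val, neg_mul, mul_neg, mul_mul_right, h0, ← smul_mul_assoc,
    ← map_smul, smul_Λm_zero_mul_five hq, map_sub, sub_mul]
  abel

def chartHom (hq : q ≠ 0) (hvc : ∀ a, Commute v (φ a)) : R4Alg q →ₐ[ℂ] Loc :=
  RingQuot.liftAlgHom ℂ ⟨FreeAlgebra.lift ℂ (chartCoord φ v), chartCoord_rel hq hvc⟩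

theorem chartHom_xg (hq : q ≠ 0) (hvc : ∀ a, Commute v (φ a)) (i : Fin 4) : chartHom hq hvc (xg q i) = chartCoord φ v i := by
  rw [chartHom, xg, RingQuot.liftAlgHom_mkAlgHom_apply, FreeAlgebra.lift_ι_apply]

theorem qcommute_chartCoord (hq : q ≠ 0) (hvc : ∀ a, Commute v (φ a)) {t : ℂ} {i j : Fin 4}
    (h : QCommute t (xg q i) (xg q j)) :
    QCommute t (chartCoord φ v i) (chartCoord φ v j) := by
  simpa only [chartHom_xg] using h.map (chartHom hq hvc)

theorem commute_chartCoord (hq : q ≠ 0) (hvc : ∀ a, Commute v (φ a)) {i j : Fin 4}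
    (h : Commute (xg q i) (xg q j)) :
    Commute (chartCoord φ v i) (chartCoord φ v j) := by
  simpa only [chartHom_xg] using h.map (chartHom hq hvc)

theorem range_chartHom (hq : q ≠ 0) (hvc : ∀ a, Commute v (φ a)) :
    (chartHom hq hvc).range = Algebra.adjoin ℂ (Set.range (chartCoord φ v)) := by
  rw [chartHom, RingQuot.range_liftAlgHom, Algebra.adjoin_range_eq_range_freeAlgebra_lift]

theorem leftInverse_chartHom (hq : q ≠ 0) (hvc : ∀ a, Commute v (φ a))
    (hv' : v * φ (Λm q 5) = 1) {χ : Loc →ₐ[ℂ] R4Alg q}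
    (hχ : χ.comp φ = dehomogenize hq) : Function.LeftInverse χ (chartHom hq hvc) := by
  have hχφ (a : GrAlg q) : χ (φ a) = dehomogenize hq a := DFunLike.congr_fun hχ a
  have hχv : χ v = 1 := by
    simpa [hχφ, dehomogenize_Λm_five] using congrArg χ hv'
  suffices χ.comp (chartHom hq hvc) = AlgHom.id ℂ (R4Alg q) from DFunLike.congr_fun this
  refine RingQuot.ringQuot_ext' ℂ _ _ (FreeAlgebra.hom_ext (funext fun i => ?_))
  change χ (chartHom hq hvc (xg q i)) = xg q i
  rw [chartHom_xg]
  fin_cases i <;>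
    simp only [chartCoord, Fin.zero_eta, Fin.mk_one, Fin.reduceFinMk, Matrix.cons_val, map_neg,
      map_mul, hχφ, dehomogenize_Λm, dehomogenizeGen, hχv, mul_one] <;>
    module

end Chart

/-- Localization of `A(Gr_θ(2;4))` at the central minor `Λ³⁴`: `Λ³⁴` is central (hence
its powers form an Ore set); in any universal localization `Loc` inverting `Λ³⁴`, the
elements `ξ₁ = −Λ¹⁴(Λ³⁴)⁻¹, ξ₂ = −Λ²⁴(Λ³⁴)⁻¹, ξ̄₁ = Λ²³(Λ³⁴)⁻¹, ξ̄₂ = Λ¹³(Λ³⁴)⁻¹`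
satisfy the braided plane relations and `qΛ¹²(Λ³⁴)⁻¹ = ξ₁ξ̄₁ − ξ̄₂ξ₂`; and the unital
subalgebra they generate is isomorphic to the presented algebra `A(ℝ⁴_θ)` via
`x₁ ↦ ξ₁, x₂ ↦ ξ₂, y₁ ↦ ξ̄₁, y₂ ↦ ξ̄₂`. -/
theorem grassmannian_localization_R4 (q : ℂ) (hq : q ≠ 0)
    (Loc : Type) [Ring Loc] [Algebra ℂ Loc] (φ : GrAlg q →ₐ[ℂ] Loc) (v : Loc)
    (hv : φ (Λm q 5) * v = 1) (hv' : v * φ (Λm q 5) = 1)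
    (huniv : ∀ (B : Type) [Ring B] [Algebra ℂ B] (ψ : GrAlg q →ₐ[ℂ] B),
      IsUnit (ψ (Λm q 5)) → ∃! χ : Loc →ₐ[ℂ] B, χ.comp φ = ψ)
    (ξ₁ ξ₂ ξb₁ ξb₂ : Loc)
    (hξ₁ : ξ₁ = -(φ (Λm q 2) * v)) (hξ₂ : ξ₂ = -(φ (Λm q 4) * v))
    (hξb₁ : ξb₁ = φ (Λm q 3) * v) (hξb₂ : ξb₂ = φ (Λm q 1) * v) :
    (∀ a : GrAlg q, Λm q 5 * a = a * Λm q 5) ∧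
      Nonempty (OreLocalization.OreSet (Submonoid.powers (Λm q 5))) ∧
      (ξ₁ * ξb₁ = q ^ 2 • (ξb₁ * ξ₁) ∧ ξ₂ * ξb₂ = (q ^ 2)⁻¹ • (ξb₂ * ξ₂) ∧
        ξ₁ * ξ₂ = q ^ 2 • (ξ₂ * ξ₁) ∧ ξb₁ * ξb₂ = (q ^ 2)⁻¹ • (ξb₂ * ξb₁) ∧
        ξ₁ * ξb₂ = ξb₂ * ξ₁ ∧ ξ₂ * ξb₁ = ξb₁ * ξ₂ ∧
        q • (φ (Λm q 0) * v) = ξ₁ * ξb₁ - ξb₂ * ξ₂) ∧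
      ∃ Φ : R4Alg q →ₐ[ℂ] Loc, Function.Injective Φ ∧
        Φ (xg q 0) = ξ₁ ∧ Φ (xg q 1) = ξ₂ ∧ Φ (xg q 2) = ξb₁ ∧ Φ (xg q 3) = ξb₂ ∧
        Φ.range = Algebra.adjoin ℂ {ξ₁, ξ₂, ξb₁, ξb₂} := by
  subst hξ₁ hξ₂ hξb₁ hξb₂
  have hvc := commute_inv_map_Λm_five φ v hv hv'
  obtain ⟨χ, hχ, -⟩ := huniv (R4Alg q) (dehomogenize hq) (by simp [dehomogenize_Λm_five])
  refine ⟨commute_Λm_five q, ⟨OreLocalization.oreSetOfLeCenter (powers_Λm_five_le_center q)⟩,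
    ⟨qcommute_chartCoord hq hvc (xg_zero_qcommute_two q),
      qcommute_chartCoord hq hvc (xg_one_qcommute_three q),
      qcommute_chartCoord hq hvc (xg_zero_qcommute_one q),
      qcommute_chartCoord hq hvc (xg_two_qcommute_three q),
      commute_chartCoord hq hvc (commute_xg_zero_three q),
      commute_chartCoord hq hvc (commute_xg_one_two q), smul_map_Λm_zero_mul hq hv hvc⟩,
    chartHom hq hvc, (leftInverse_chartHom hq hvc hv' hχ).injective, chartHom_xg hq hvc 0,
    chartHom_xg hq hvc 1, chartHom_xg hq hvc 2, chartHom_xg hq hvc 3, ?_⟩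
  rw [range_chartHom, chartCoord]
  simp only [Matrix.range_cons, Matrix.range_empty, Set.union_empty, Set.singleton_union]
end
end

section
/- Let q ∈ ℂ with q ≠ 0 and let A_ℓ be the quotient of the free associative ℂ-algebra on two generators w₁, w₂ by the two-sided ideal generated by w₁w₂ − q²w₂w₁. Then the non-negative powers of w₁ form a left (and right) denominator (Ore) set in A_ℓ, and in the Ore localization A_ℓ[w₁⁻¹] the unital ℂ-subalgebra generated by y = w₁⁻¹w₂ is isomorphic to the commutative polynomial ring ℂ[T] via T ↦ w₁⁻¹w₂; moreover this subalgebra is exactly the set of degree-zero elements of the localization, where w₁ and w₂ have degree 1 and w₁⁻¹ has degree −1. -/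
/-!
The generator `w₁` is normal: `w₁ a = σ(a) w₁` for the automorphism `σ` of `A_ℓ` fixing `w₁` and
scaling `w₂` by `q²`, and the powers of a normal element form an Ore set.

In the localization, `w₂ w₁⁻¹ = q² w₁⁻¹ w₂`, so `(w₁⁻¹ w₂)ⁿ` is a nonzero multiple of
`w₁⁻ⁿ w₂ⁿ = w₁⁻⁽ᵃ⁺ⁿ⁾ (w₁ᵃ w₂ⁿ)`; hence the degree-zero elements are exactly the linear
combinations of powers of `y = w₁⁻¹ w₂`.

That `ℂ[T] → A_ℓ[w₁⁻¹]`, `T ↦ y`, is injective is seen in the representation of `A_ℓ` on `ℂ[X]`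
in which `w₁` acts invertibly by `p(X) ↦ p(q²X)` and `w₂` by `w₁` after multiplication by `X`:
the universal property sends `y` to multiplication by `X`, which is faithful on `ℂ[X]`.
-/

noncomputable section

open FreeAlgebra

/-- The relation `w₁w₂ = q²w₂w₁` defining the homogeneous coordinate algebra
`A_ℓ = A(ℂP¹_θ)` of the noncommutative projective line (generators indexed `0, 1`). -/
inductive PLRel (q : ℂ) : FreeAlgebra ℂ (Fin 2) → FreeAlgebra ℂ (Fin 2) → Prop
  | r : PLRel q (ι ℂ 0 * ι ℂ 1) (q ^ 2 • (ι ℂ 1 * ι ℂ 0))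

/-- The homogeneous coordinate algebra `A_ℓ = A(ℂP¹_θ)`. -/
abbrev PLAlg (q : ℂ) := RingQuot (PLRel q)

/-- The generators `w₁, w₂` of `A_ℓ` (indexed by `0, 1`). -/
def wL (q : ℂ) (i : Fin 2) : PLAlg q := RingQuot.mkAlgHom ℂ (PLRel q) (ι ℂ i)

/-- The degree-`m` homogeneous component of `A_ℓ`: the span of the ordered monomials
`w₁^a w₂^b` with `a + b = m`. -/
def degPart (q : ℂ) (m : ℕ) : Submodule ℂ (PLAlg q) :=
  Submodule.span ℂ {z : PLAlg q | ∃ a b : ℕ, a + b = m ∧ z = wL q 0 ^ a * wL q 1 ^ b}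

section NormalElement

variable {R : Type*} [Monoid R] {s : R} {σ : MulAut R}

theorem mulAut_pow_apply_of_apply_eq (hσs : σ s = s) (n : ℕ) : (σ ^ n) s = s := by
  induction n with
  | zero => rfl
  | succ n ih => rw [pow_succ, MulAut.mul_apply, hσs, ih]

theorem pow_mul_eq_mulAut_pow_mul (h : ∀ a, s * a = σ a * s) (n : ℕ) (a : R) :
    s ^ n * a = (σ ^ n) a * s ^ n := by
  induction n generalizing a with
  | zero => simp
  | succ n ih => rw [pow_succ, mul_assoc, h, ← mul_assoc, ih, mul_assoc, ← pow_succ,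
      pow_succ σ n, MulAut.mul_apply]

theorem range_mul_left_eq_range_mul_right (h : ∀ a, s * a = σ a * s) :
    Set.range (s * ·) = Set.range (· * s) := by
  ext z
  constructor
  · rintro ⟨a, rfl⟩
    exact ⟨σ a, (h a).symm⟩
  · rintro ⟨a, rfl⟩
    exact ⟨σ⁻¹ a, show s * σ⁻¹ a = a * s by rw [h, MulAut.apply_inv_self]⟩

theorem OreLocalization.nonempty_oreSet_powers_of_normal (hσs : σ s = s)
    (h : ∀ a, s * a = σ a * s) : Nonempty (OreSet (Submonoid.powers s)) := by
  have hexp (t : Submonoid.powers s) : ∃ n, s ^ n = t := t.2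
  choose n hn using hexp
  have mul_pow_eq (r : R) (k : ℕ) : r * s ^ k = s ^ k * (σ ^ k)⁻¹ r := by
    rw [pow_mul_eq_mulAut_pow_mul h, MulAut.apply_inv_self]
  refine ⟨{ ore_right_cancel := fun r₁ r₂ t ht => ⟨t, ?_⟩,
             oreNum := fun r t => (σ ^ n t) r,
             oreDenom := fun _ t => t,
             ore_eq := fun r t => ?_ }⟩
  · rw [← hn, mul_pow_eq, mul_pow_eq] at ht
    rw [← hn]
    simpa only [map_mul, map_pow, mulAut_pow_apply_of_apply_eq hσs, MulAut.apply_inv_self]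
      using congrArg (σ ^ n t) ht
  · rw [← hn]
    exact pow_mul_eq_mulAut_pow_mul h _ r

end NormalElement

section TwistedCommute

variable {R A : Type*} [CommSemiring R] [Semiring A] [Algebra R A] {a b : A} {c : R}

theorem pow_mul_eq_smul_of_mul_eq_smul (h : b * a = c • (a * b)) (n : ℕ) :
    b ^ n * a = c ^ n • (a * b ^ n) := by
  induction n with
  | zero => simp
  | succ n ih => rw [pow_succ', mul_assoc, ih, mul_smul_comm, ← mul_assoc, h, smul_mul_assoc,
      smul_smul, mul_assoc, ← pow_succ', pow_succ, ← pow_succ]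

theorem mul_pow_of_mul_eq_smul (h : b * a = c • (a * b)) (n : ℕ) :
    (a * b) ^ n = c ^ n.choose 2 • (a ^ n * b ^ n) := by
  induction n with
  | zero => simp
  | succ n ih =>
    rw [pow_succ, ih, smul_mul_assoc, mul_assoc, ← mul_assoc (b ^ n),
      pow_mul_eq_smul_of_mul_eq_smul h, smul_mul_assoc, mul_smul_comm, smul_smul, ← pow_add,
      Nat.choose_succ_succ', Nat.choose_one_right, add_comm n, ← mul_assoc, ← mul_assoc,
      ← pow_succ, mul_assoc, ← pow_succ]

end TwistedCommute

namespace PLAlg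

variable (q : ℂ)

theorem wL_zero_mul_wL_one : wL q 0 * wL q 1 = q ^ 2 • (wL q 1 * wL q 0) := by
  simpa only [map_mul, map_smul, wL] using RingQuot.mkAlgHom_rel ℂ (PLRel.r (q := q))

variable {q} {B : Type*} [Semiring B] [Algebra ℂ B]

def lift (x y : B) (h : x * y = q ^ 2 • (y * x)) : PLAlg q →ₐ[ℂ] B :=
  RingQuot.liftAlgHom ℂ ⟨FreeAlgebra.lift ℂ ![x, y], by
    rintro _ _ ⟨⟩
    simpa only [map_mul, map_smul, FreeAlgebra.lift_ι_apply, Matrix.cons_val_zero,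
      Matrix.cons_val_one, Matrix.head_cons] using h⟩

@[simp] theorem lift_wL_zero (x y : B) (h : x * y = q ^ 2 • (y * x)) :
    lift x y h (wL q 0) = x := by
  simp [lift, wL, RingQuot.liftAlgHom_mkAlgHom_apply]

@[simp] theorem lift_wL_one (x y : B) (h : x * y = q ^ 2 • (y * x)) :
    lift x y h (wL q 1) = y := by
  simp [lift, wL, RingQuot.liftAlgHom_mkAlgHom_apply]

theorem algHom_ext {f g : PLAlg q →ₐ[ℂ] B} (h₀ : f (wL q 0) = g (wL q 0))
    (h₁ : f (wL q 1) = g (wL q 1)) : f = g := by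
  refine RingQuot.ringQuot_ext' _ _ _ (FreeAlgebra.hom_ext (funext fun i => ?_))
  fin_cases i
  exacts [h₀, h₁]

variable (q)

def scale (c : ℂ) : PLAlg q →ₐ[ℂ] PLAlg q :=
  lift (wL q 0) (c • wL q 1) <| by
    rw [mul_smul_comm, smul_mul_assoc, wL_zero_mul_wL_one, smul_comm]

@[simp] theorem scale_wL_zero (c : ℂ) : scale q c (wL q 0) = wL q 0 := lift_wL_zero ..

@[simp] theorem scale_wL_one (c : ℂ) : scale q c (wL q 1) = c • wL q 1 := lift_wL_one ..

theorem scale_comp_scale (c d : ℂ) : (scale q c).comp (scale q d) = scale q (c * d) := by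
  apply algHom_ext <;> simp [smul_smul, mul_comm]

theorem scale_one : scale q 1 = AlgHom.id ℂ (PLAlg q) := by
  apply algHom_ext <;> simp

def scaleEquiv {c : ℂ} (hc : c ≠ 0) : PLAlg q ≃ₐ[ℂ] PLAlg q :=
  AlgEquiv.ofAlgHom (scale q c) (scale q c⁻¹)
    (by rw [scale_comp_scale, mul_inv_cancel₀ hc, scale_one])
    (by rw [scale_comp_scale, inv_mul_cancel₀ hc, scale_one])

theorem wL_zero_mul (a : PLAlg q) : wL q 0 * a = scale q (q ^ 2) a * wL q 0 := by
  obtain ⟨x, rfl⟩ := RingQuot.mkAlgHom_surjective ℂ (PLRel q) a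
  induction x using FreeAlgebra.induction with
  | grade0 r => rw [AlgHom.commutes, AlgHom.commutes, Algebra.commutes]
  | grade1 i =>
    fin_cases i
    · exact (congrArg (· * wL q 0) (scale_wL_zero q _)).symm
    · change wL q 0 * wL q 1 = scale q (q ^ 2) (wL q 1) * wL q 0
      rw [scale_wL_one, wL_zero_mul_wL_one, smul_mul_assoc]
  | mul x y hx hy => rw [map_mul, map_mul, ← mul_assoc, hx, mul_assoc, hy, ← mul_assoc]
  | add x y hx hy => rw [map_add, map_add, mul_add, add_mul, hx, hy]

theorem wL_zero_mul_mem_degPart {m : ℕ} {x : PLAlg q} (hx : x ∈ degPart q m) :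
    wL q 0 * x ∈ degPart q (m + 1) := by
  suffices degPart q m ≤ (degPart q (m + 1)).comap (LinearMap.mulLeft ℂ (wL q 0)) from this hx
  refine Submodule.span_le.2 ?_
  rintro _ ⟨a, b, rfl, rfl⟩
  exact Submodule.subset_span ⟨a + 1, b, by ring, by simp [pow_succ', mul_assoc]⟩

end PLAlg

namespace Polynomial

variable {K : Type*} [Field K]

theorem aeval_C_mul_X_mul_lmul_X (c : K) :
    (aeval (C c * X)).toLinearMap * Algebra.lmul K K[X] X
      = c • (Algebra.lmul K K[X] X * (aeval (C c * X)).toLinearMap) := by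
  refine LinearMap.ext fun p => ?_
  simp [smul_eq_C_mul, mul_assoc]

theorem isUnit_aeval_C_mul_X_toLinearMap {c : K} (hc : c ≠ 0) :
    IsUnit ((aeval (C c * X)).toLinearMap : Module.End K K[X]) := by
  have hcomp (a b : K) (hab : a * b = 1) : (C a * X).comp (C b * X) = X := by
    simp [← mul_assoc, ← C_mul, hab]
  rw [Module.End.isUnit_iff]
  exact (algEquivOfCompEqX _ _ (hcomp _ _ (mul_inv_cancel₀ hc))
    (hcomp _ _ (inv_mul_cancel₀ hc))).bijective

end Polynomial

namespace PLAlg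

open Polynomial

variable (q : ℂ)

def polyRep : PLAlg q →ₐ[ℂ] Module.End ℂ ℂ[X] :=
  lift (aeval (C (q ^ 2) * X)).toLinearMap
    ((aeval (C (q ^ 2) * X)).toLinearMap * Algebra.lmul ℂ ℂ[X] X)
    (by rw [mul_assoc, aeval_C_mul_X_mul_lmul_X, mul_smul_comm])

theorem polyRep_wL_zero : polyRep q (wL q 0) = (aeval (C (q ^ 2) * X)).toLinearMap :=
  lift_wL_zero ..

theorem polyRep_wL_one :
    polyRep q (wL q 1) = (aeval (C (q ^ 2) * X)).toLinearMap * Algebra.lmul ℂ ℂ[X] X :=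
  lift_wL_one ..

theorem isUnit_polyRep_wL_zero {q : ℂ} (hq : q ≠ 0) : IsUnit (polyRep q (wL q 0)) := by
  rw [polyRep_wL_zero]
  exact isUnit_aeval_C_mul_X_toLinearMap (pow_ne_zero 2 hq)

section Localization

variable {q : ℂ} {L : Type*} [Ring L] [Algebra ℂ L] {φ : PLAlg q →ₐ[ℂ] L} {v : L}

theorem map_wL_one_mul_eq (hv : φ (wL q 0) * v = 1) (hv' : v * φ (wL q 0) = 1) :
    φ (wL q 1) * v = q ^ 2 • (v * φ (wL q 1)) :=
  calc φ (wL q 1) * v = v * (φ (wL q 0) * φ (wL q 1)) * v := by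
        rw [← mul_assoc v, hv', one_mul]
    _ = v * (q ^ 2 • (φ (wL q 1) * φ (wL q 0))) * v := by
        rw [← map_mul, wL_zero_mul_wL_one, map_smul, map_mul]
    _ = q ^ 2 • (v * φ (wL q 1)) := by
        rw [mul_smul_comm, smul_mul_assoc, mul_assoc, mul_assoc, hv, mul_one]

theorem inv_mul_map_wL_one_pow (hv : φ (wL q 0) * v = 1) (hv' : v * φ (wL q 0) = 1) (n : ℕ) :
    (v * φ (wL q 1)) ^ n = (q ^ 2) ^ n.choose 2 • (v ^ n * φ (wL q 1) ^ n) :=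
  mul_pow_of_mul_eq_smul (map_wL_one_mul_eq hv hv') n

theorem inv_pow_mul_map_monomial (hv' : v * φ (wL q 0) = 1) (a b : ℕ) :
    v ^ (a + b) * φ (wL q 0 ^ a * wL q 1 ^ b) = v ^ b * φ (wL q 1) ^ b := by
  rw [map_mul, map_pow, map_pow, add_comm, pow_add, mul_assoc, ← mul_assoc (v ^ a),
    pow_mul_pow_eq_one a hv', one_mul]

variable (φ v) in
def degZeroPart (m : ℕ) : Submodule ℂ L :=
  (degPart q m).map (LinearMap.mulLeft ℂ (v ^ m) ∘ₗ φ.toLinearMap)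

theorem monotone_degZeroPart (hv' : v * φ (wL q 0) = 1) : Monotone (degZeroPart φ v) := by
  refine monotone_nat_of_le_succ fun m => ?_
  rintro _ ⟨x, hx, rfl⟩
  refine ⟨wL q 0 * x, wL_zero_mul_mem_degPart q hx, ?_⟩
  simp [pow_succ, ← mul_assoc v, hv']

theorem adjoin_toSubmodule_eq_iSup_degZeroPart (hq : q ≠ 0) (hv : φ (wL q 0) * v = 1)
    (hv' : v * φ (wL q 0) = 1) :
    Subalgebra.toSubmodule (Algebra.adjoin ℂ {v * φ (wL q 1)}) = ⨆ m, degZeroPart φ v m := by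
  apply le_antisymm
  · rw [Algebra.adjoin_eq_span, ← Submonoid.powers_eq_closure, Submodule.span_le]
    rintro _ ⟨n, rfl⟩
    refine Submodule.mem_iSup_of_mem n ⟨(q ^ 2) ^ n.choose 2 • (wL q 0 ^ 0 * wL q 1 ^ n),
      Submodule.smul_mem _ _ (Submodule.subset_span ⟨0, n, zero_add n, rfl⟩), ?_⟩
    simp [inv_mul_map_wL_one_pow hv hv']
  · refine iSup_le fun m => Submodule.map_le_iff_le_comap.2 (Submodule.span_le.2 ?_)
    rintro _ ⟨a, b, rfl, rfl⟩
    have hc : (q ^ 2) ^ b.choose 2 ≠ 0 := pow_ne_zero _ (pow_ne_zero 2 hq)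
    change v ^ (a + b) * φ (wL q 0 ^ a * wL q 1 ^ b) ∈ Algebra.adjoin ℂ {v * φ (wL q 1)}
    rw [inv_pow_mul_map_monomial hv', ← inv_smul_smul₀ hc (v ^ b * _),
      ← inv_mul_map_wL_one_pow hv hv']
    exact Subalgebra.smul_mem _ (Subalgebra.pow_mem _ (Algebra.self_mem_adjoin_singleton ℂ _) b) _

theorem coe_adjoin_eq_degree_zero (hq : q ≠ 0) (hv : φ (wL q 0) * v = 1)
    (hv' : v * φ (wL q 0) = 1) :
    (Algebra.adjoin ℂ {v * φ (wL q 1)} : Set L)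
      = {z : L | ∃ (m : ℕ) (x : PLAlg q), x ∈ degPart q m ∧ z = v ^ m * φ x} := by
  rw [← Subalgebra.coe_toSubmodule, adjoin_toSubmodule_eq_iSup_degZeroPart hq hv hv',
    Submodule.coe_iSup_of_directed _ (monotone_degZeroPart hv').directed_le]
  ext z
  simp [degZeroPart, eq_comm]

theorem aeval_inv_mul_map_wL_one_injective (hv' : v * φ (wL q 0) = 1)
    {χ : L →ₐ[ℂ] Module.End ℂ ℂ[X]} (hχ : χ.comp φ = polyRep q) :
    Function.Injective (aeval (R := ℂ) (v * φ (wL q 1))) := by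
  have hχφ (i : Fin 2) : χ (φ (wL q i)) = polyRep q (wL q i) := AlgHom.congr_fun hχ (wL q i)
  have hχy : χ (v * φ (wL q 1)) = Algebra.lmul ℂ ℂ[X] X :=
    calc χ (v * φ (wL q 1)) = χ v * polyRep q (wL q 0) * Algebra.lmul ℂ ℂ[X] X := by
          rw [map_mul, hχφ, polyRep_wL_one, polyRep_wL_zero, mul_assoc]
      _ = Algebra.lmul ℂ ℂ[X] X := by rw [← hχφ, ← map_mul, hv', map_one, one_mul]
  have hcomp : χ.comp (aeval (v * φ (wL q 1))) = Algebra.lmul ℂ ℂ[X] :=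
    Polynomial.algHom_ext (by rw [AlgHom.comp_apply, aeval_X, hχy])
  refine Function.Injective.of_comp (f := χ) ?_
  rw [← AlgHom.coe_comp, hcomp]
  exact Algebra.lmul_injective

end Localization

end PLAlg

/-- In `A_ℓ = A(ℂP¹_θ)` the powers of `w₁` form a left (and right) Ore set, and in any
universal localization `Loc` inverting `w₁`, the unital subalgebra generated by
`y = w₁⁻¹w₂` is a commutative polynomial ring `ℂ[T]` via `T ↦ w₁⁻¹w₂`, and coincides
with the set of degree-zero elements `{ w₁⁻ᵐ x : x homogeneous of degree m }` of the
localization. -/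
theorem projective_line_localization (q : ℂ) (hq : q ≠ 0)
    (Loc : Type) [Ring Loc] [Algebra ℂ Loc] (φ : PLAlg q →ₐ[ℂ] Loc) (v : Loc)
    (hv : φ (wL q 0) * v = 1) (hv' : v * φ (wL q 0) = 1)
    (huniv : ∀ (B : Type) [Ring B] [Algebra ℂ B] (ψ : PLAlg q →ₐ[ℂ] B),
      IsUnit (ψ (wL q 0)) → ∃! χ : Loc →ₐ[ℂ] B, χ.comp φ = ψ) :
    (Set.range (fun a : PLAlg q => wL q 0 * a)
        = Set.range (fun a : PLAlg q => a * wL q 0)) ∧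
      Nonempty (OreLocalization.OreSet (Submonoid.powers (wL q 0))) ∧
      (∃ Φ : Polynomial ℂ →ₐ[ℂ] Loc, Φ Polynomial.X = v * φ (wL q 1) ∧
        Function.Injective Φ ∧
        Φ.range = Algebra.adjoin ℂ {v * φ (wL q 1)}) ∧
      ((Algebra.adjoin ℂ {v * φ (wL q 1)} : Subalgebra ℂ Loc) : Set Loc)
        = {z : Loc | ∃ (m : ℕ) (x : PLAlg q), x ∈ degPart q m ∧ z = v ^ m * φ x} := by
  have hnormal (a : PLAlg q) :
      wL q 0 * a = (PLAlg.scaleEquiv q (pow_ne_zero 2 hq)).toMulEquiv a * wL q 0 :=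
    PLAlg.wL_zero_mul q a
  obtain ⟨χ, hχ, -⟩ := huniv _ (PLAlg.polyRep q) (PLAlg.isUnit_polyRep_wL_zero hq)
  exact ⟨range_mul_left_eq_range_mul_right hnormal,
    OreLocalization.nonempty_oreSet_powers_of_normal (PLAlg.scale_wL_zero q _) hnormal,
    ⟨Polynomial.aeval _, Polynomial.aeval_X _,
      PLAlg.aeval_inv_mul_map_wL_one_injective hv' hχ,
      (Algebra.adjoin_singleton_eq_range_aeval ℂ _).symm⟩,
    PLAlg.coe_adjoin_eq_degree_zero hq hv hv'⟩
end
end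

section
/- Fix q ∈ ℂ with q ≠ 0 and q² ≠ 1. Consider the set S of quadruples (b₁, b₂, i, j) ∈ ℂ⁴ satisfying the braided ADHM equation (1 − q⁻²)·b₁b₂ + i·j = 0 and the stability condition i ≠ 0, with the action of the multiplicative group ℂˣ given by t ▷ (b₁, b₂, i, j) = (b₁, b₂, t·i, t⁻¹·j). Then every ℂˣ-orbit in S contains exactly one quadruple with i = 1, namely (b₁, b₂, 1, (q⁻² − 1)·b₁b₂); consequently the map ℂ² → S/ℂˣ sending (b₁, b₂) to the orbit of (b₁, b₂, 1, (q⁻² − 1)·b₁b₂) is a bijection. -/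
noncomputable section

/-- The set of stable charge-one rank-one braided ADHM data: quadruples
`(b₁, b₂, i, j) ∈ ℂ⁴` with `(1 − q⁻²)b₁b₂ + ij = 0` and `i ≠ 0`. -/
def ADHM11 (q : ℂ) : Set (ℂ × ℂ × ℂ × ℂ) :=
  {p | (1 - (q ^ 2)⁻¹) * p.1 * p.2.1 + p.2.2.1 * p.2.2.2 = 0 ∧ p.2.2.1 ≠ 0}

/-- The `ℂˣ`-action `t ▷ (b₁, b₂, i, j) = (b₁, b₂, t·i, t⁻¹·j)`. -/
def actGL1 (t : ℂˣ) (p : ℂ × ℂ × ℂ × ℂ) : ℂ × ℂ × ℂ × ℂ :=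
  (p.1, p.2.1, (t : ℂ) * p.2.2.1, ((t⁻¹ : ℂˣ) : ℂ) * p.2.2.2)

/-- The orbit relation of the `ℂˣ`-action on quadruples. -/
def orbRel (p p' : ℂ × ℂ × ℂ × ℂ) : Prop := ∃ t : ℂˣ, p' = actGL1 t p

/-- The orbit relation restricted to the set of stable ADHM data. -/
def orbRelS (q : ℂ) (x y : ADHM11 q) : Prop := orbRel (x : ℂ × ℂ × ℂ × ℂ) (y : ℂ × ℂ × ℂ × ℂ)

/-- The canonical representative `(b₁, b₂, 1, (q⁻² − 1)b₁b₂)`. -/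
def canon11 (q b1 b2 : ℂ) : ℂ × ℂ × ℂ × ℂ := (b1, b2, 1, ((q ^ 2)⁻¹ - 1) * b1 * b2)

/-- The canonical representative is a stable ADHM datum. -/
lemma canon11_mem (q b1 b2 : ℂ) : canon11 q b1 b2 ∈ ADHM11 q := by
  constructor
  · show (1 - (q ^ 2)⁻¹) * b1 * b2 + 1 * (((q ^ 2)⁻¹ - 1) * b1 * b2) = 0
    ring
  · exact one_ne_zero

lemma actGL1_one (p : ℂ × ℂ × ℂ × ℂ) : actGL1 1 p = p := by
  simp [actGL1]

lemma actGL1_mul (s t : ℂˣ) (p : ℂ × ℂ × ℂ × ℂ) :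
    actGL1 (s * t) p = actGL1 s (actGL1 t p) := by
  simp only [actGL1, Units.val_mul, mul_inv_rev, mul_assoc, mul_left_comm (t⁻¹ : ℂˣ).val]

lemma orbRel_equivalence : Equivalence orbRel where
  refl p := ⟨1, (actGL1_one p).symm⟩
  symm := by
    rintro p _ ⟨t, rfl⟩
    exact ⟨t⁻¹, by rw [← actGL1_mul, inv_mul_cancel, actGL1_one]⟩
  trans := by
    rintro p _ _ ⟨t, rfl⟩ ⟨s, rfl⟩
    exact ⟨s * t, (actGL1_mul s t p).symm⟩

lemma orbRelS_equivalence (q : ℂ) : Equivalence (orbRelS q) :=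
  orbRel_equivalence.comap _

lemma orbRel.fst_eq {p p' : ℂ × ℂ × ℂ × ℂ} (h : orbRel p p') : (p'.1, p'.2.1) = (p.1, p.2.1) := by
  obtain ⟨t, rfl⟩ := h
  rfl

lemma i_mul_j_of_mem_ADHM11 {q : ℂ} {p : ℂ × ℂ × ℂ × ℂ} (hp : p ∈ ADHM11 q) :
    p.2.2.1 * p.2.2.2 = ((q ^ 2)⁻¹ - 1) * p.1 * p.2.1 := by
  linear_combination hp.1

-- `t i = 1` forces `t⁻¹ = i`, so the new `j` is `i j`, which the ADHM equation determines.
lemma actGL1_eq_canon11 {q : ℂ} {p : ℂ × ℂ × ℂ × ℂ} (hp : p ∈ ADHM11 q) {t : ℂˣ}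
    (ht : (t : ℂ) * p.2.2.1 = 1) : actGL1 t p = canon11 q p.1 p.2.1 := by
  rw [actGL1, canon11, ht, Units.inv_eq_of_mul_eq_one_right ht, i_mul_j_of_mem_ADHM11 hp]

lemma orbRel_canon11 {q : ℂ} {p : ℂ × ℂ × ℂ × ℂ} (hp : p ∈ ADHM11 q) :
    orbRel p (canon11 q p.1 p.2.1) :=
  ⟨(Units.mk0 _ hp.2)⁻¹, (actGL1_eq_canon11 hp (by simp [hp.2])).symm⟩

theorem charge_one_moduli_general (q : ℂ) :
    (∀ p ∈ ADHM11 q,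
        orbRel p (canon11 q p.1 p.2.1) ∧
        ∀ p' : ℂ × ℂ × ℂ × ℂ, orbRel p p' → p'.2.2.1 = 1 → p' = canon11 q p.1 p.2.1) ∧
      Function.Bijective
        (fun b : ℂ × ℂ =>
          Quot.mk (orbRelS q) (⟨canon11 q b.1 b.2, canon11_mem q b.1 b.2⟩ : ADHM11 q)) := by
  refine ⟨fun p hp => ⟨orbRel_canon11 hp, ?_⟩, ?_, ?_⟩
  · rintro _ ⟨t, rfl⟩ hi
    exact actGL1_eq_canon11 hp hi
  · intro b b' h
    exact (((orbRelS_equivalence q).eqvGen_iff.mp (Quot.eq.mp h)).fst_eq).symm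
  · rintro ⟨p, hp⟩
    exact ⟨(p.1, p.2.1), Quot.sound (orbRel_equivalence.symm (orbRel_canon11 hp))⟩

/-- Every `ℂˣ`-orbit of stable charge-one ADHM data contains exactly one quadruple with
`i = 1`, namely `(b₁, b₂, 1, (q⁻² − 1)b₁b₂)`; consequently `(b₁, b₂) ↦ [the orbit of
the canonical representative]` is a bijection from `ℂ²` onto the quotient of the set
of stable data by the `ℂˣ`-action. -/
theorem charge_one_moduli (q : ℂ) (hq : q ≠ 0) (hq2 : q ^ 2 ≠ 1) :
    (∀ p ∈ ADHM11 q,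
        orbRel p (canon11 q p.1 p.2.1) ∧
        ∀ p' : ℂ × ℂ × ℂ × ℂ, orbRel p p' → p'.2.2.1 = 1 → p' = canon11 q p.1 p.2.1) ∧
      Function.Bijective
        (fun b : ℂ × ℂ =>
          Quot.mk (orbRelS q) (⟨canon11 q b.1 b.2, canon11_mem q b.1 b.2⟩ : ADHM11 q)) :=
  charge_one_moduli_general q
end
end
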